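/- arXiv:1406.4932 — 5 statements merged into one kernel-verified Lean document; each statement's English description precedes it below -/
import Mathlib

section
/- Let H be a complex Hilbert space and let A and B be bounded linear operators on H. Assume A is normal, Re⟨f, A f⟩ ≥ 0 for all f ∈ H, and there is a constant c > 0 with Re⟨f, B f⟩ ≥ c‖f‖² for all f ∈ H. Let Π denote the orthogonal projection of H onto the kernel of A. Then: (i) for every λ ≥ 0 the operator λA + B is boundedly invertible; (ii) the compression of B to ker A, i.e. the operator g ↦ Π(B g) on the closed subspace ker A, is boundedly invertible on ker A; and (iii) for all φ, ψ ∈ H, lim_{λ→∞} ⟨φ, (λA + B)⁻¹ ψ⟩ = ⟨Π φ, (ΠBΠ restricted to ker A)⁻¹ (Π ψ)⟩. -/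
open scoped InnerProductSpace
open Filter Topology

section Aux

variable {E : Type*} [NormedAddCommGroup E] [InnerProductSpace ℂ E] [CompleteSpace E]

omit [CompleteSpace E] in
lemma coercive_norm_le (T : E →L[ℂ] E) {c : ℝ} (_hc : 0 < c)
    (h : ∀ f, c * ‖f‖ ^ 2 ≤ (⟪f, T f⟫_ℂ).re) (f : E) : c * ‖f‖ ≤ ‖T f‖ := by
  rcases eq_or_ne f 0 with rfl | hf
  · simp
  have hf' : 0 < ‖f‖ := norm_pos_iff.mpr hf
  have h1 : c * ‖f‖ ^ 2 ≤ ‖f‖ * ‖T f‖ := by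
    calc c * ‖f‖ ^ 2 ≤ (⟪f, T f⟫_ℂ).re := h f
    _ ≤ ‖⟪f, T f⟫_ℂ‖ := Complex.re_le_norm _
    _ = ‖⟪f, T f⟫_ℂ‖ := rfl
    _ ≤ ‖f‖ * ‖T f‖ := norm_inner_le_norm _ _
  nlinarith

lemma coercive_isUnit (T : E →L[ℂ] E) {c : ℝ} (hc : 0 < c)
    (h : ∀ f, c * ‖f‖ ^ 2 ≤ (⟪f, T f⟫_ℂ).re) : IsUnit T := by
  have hanti : AntilipschitzWith (Real.toNNReal c⁻¹) T := by
    apply T.antilipschitz_of_bound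
    intro x
    have h1 := coercive_norm_le T hc h x
    rw [Real.coe_toNNReal _ (inv_pos.mpr hc).le]
    calc ‖x‖ = c⁻¹ * (c * ‖x‖) := by field_simp
    _ ≤ c⁻¹ * ‖T x‖ := mul_le_mul_of_nonneg_left h1 (inv_pos.mpr hc).le
  have hker : LinearMap.ker (T : E →ₗ[ℂ] E) = ⊥ := LinearMap.ker_eq_bot (f := (T : E →ₗ[ℂ] E)).mpr hanti.injective
  have hclosed : IsClosed (LinearMap.range (T : E →ₗ[ℂ] E) : Set E) :=
    hanti.isClosed_range T.uniformContinuous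
  have horth : (LinearMap.range (T : E →ₗ[ℂ] E))ᗮ = ⊥ := by
    rw [Submodule.eq_bot_iff]
    intro x hx
    have h0 : ⟪T x, x⟫_ℂ = 0 := (Submodule.mem_orthogonal _ x).mp hx (T x) (LinearMap.mem_range_self _ x)
    have h0' : ⟪x, T x⟫_ℂ = 0 := by rw [← inner_conj_symm, h0, map_zero]
    have := h x
    rw [h0'] at this
    simp only [Complex.zero_re] at this
    have hsq : ‖x‖ ^ 2 ≤ 0 := by
      by_contra hpos
      push_neg at hpos
      nlinarith
    have : ‖x‖ ^ 2 = 0 := le_antisymm hsq (sq_nonneg _)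
    exact norm_eq_zero.mp (pow_eq_zero_iff (two_ne_zero) |>.mp this)
  have hrange : LinearMap.range (T : E →ₗ[ℂ] E) = ⊤ := by
    have := (Submodule.topologicalClosure_eq_top_iff (K := LinearMap.range (T : E →ₗ[ℂ] E))).mpr horth
    rwa [IsClosed.submodule_topologicalClosure_eq hclosed] at this
  let e := ContinuousLinearEquiv.ofBijective T hker hrange
  refine ⟨⟨T, e.symm.toContinuousLinearMap, ?_, ?_⟩, rfl⟩
  · ext x
    simp only [ContinuousLinearMap.mul_apply, ContinuousLinearMap.one_apply,
      ContinuousLinearEquiv.coe_coe]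
    exact e.apply_symm_apply x
  · ext x
    simp only [ContinuousLinearMap.mul_apply, ContinuousLinearMap.one_apply,
      ContinuousLinearEquiv.coe_coe]
    exact e.symm_apply_apply x

lemma coercive_apply_inverse (T : E →L[ℂ] E) (hT : IsUnit T) (x : E) :
    T (Ring.inverse T x) = x := by
  have h := Ring.mul_inverse_cancel T hT
  calc T (Ring.inverse T x) = (T * Ring.inverse T) x := rfl
  _ = x := by rw [h]; rfl

lemma coercive_inverse_apply (T : E →L[ℂ] E) (hT : IsUnit T) (x : E) :
    Ring.inverse T (T x) = x := by
  have h := Ring.inverse_mul_cancel T hT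
  calc Ring.inverse T (T x) = (Ring.inverse T * T) x := rfl
  _ = x := by rw [h]; rfl

lemma coercive_inverse_norm_le (T : E →L[ℂ] E) {c : ℝ} (hc : 0 < c)
    (h : ∀ f, c * ‖f‖ ^ 2 ≤ (⟪f, T f⟫_ℂ).re) (x : E) :
    ‖Ring.inverse T x‖ ≤ c⁻¹ * ‖x‖ := by
  have hT := coercive_isUnit T hc h
  have h1 := coercive_norm_le T hc h (Ring.inverse T x)
  rw [coercive_apply_inverse T hT x] at h1
  calc ‖Ring.inverse T x‖ = c⁻¹ * (c * ‖Ring.inverse T x‖) := by field_simp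
  _ ≤ c⁻¹ * ‖x‖ := mul_le_mul_of_nonneg_left h1 (inv_pos.mpr hc).le

end Aux

set_option maxHeartbeats 2000000 in
/-- Lemma on limits of resolvents. Let `A`, `B` be bounded operators on a
complex Hilbert space `H`, with `A` normal, `Re⟪f, A f⟫ ≥ 0` for all `f`, and
`Re⟪f, B f⟫ ≥ c‖f‖²` for all `f` with `c > 0`.  Let `Π` be the orthogonal projection onto
`ker A`.  Then (i) `λA + B` is boundedly invertible for every `λ ≥ 0`; (ii) the compression
`ΠBΠ` of `B` to `ker A` is boundedly invertible on `ker A`; and (iii) for all `φ, ψ`,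
`⟪φ, (λA + B)⁻¹ ψ⟫ → ⟪Π φ, (ΠBΠ)⁻¹ Π ψ⟫` as `λ → ∞`. -/
theorem stmt_0 {H : Type*} [NormedAddCommGroup H] [InnerProductSpace ℂ H] [CompleteSpace H]
    (A B : H →L[ℂ] H)
    (hAnormal : A.comp (ContinuousLinearMap.adjoint A)
      = (ContinuousLinearMap.adjoint A).comp A)
    (hApos : ∀ f : H, 0 ≤ (⟪f, A f⟫_ℂ).re)
    (c : ℝ) (hc : 0 < c)
    (hB : ∀ f : H, c * ‖f‖ ^ 2 ≤ (⟪f, B f⟫_ℂ).re) :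
    (∀ lam : ℝ, 0 ≤ lam → IsUnit ((lam : ℂ) • A + B)) ∧
    IsUnit (((LinearMap.ker (A : H →ₗ[ℂ] H)).orthogonalProjectionOnto).comp
      (B.comp (LinearMap.ker (A : H →ₗ[ℂ] H)).subtypeL)) ∧
    ∀ φ ψ : H,
      Tendsto (fun lam : ℝ => ⟪φ, Ring.inverse ((lam : ℂ) • A + B) ψ⟫_ℂ) atTop
        (𝓝 ⟪(LinearMap.ker (A : H →ₗ[ℂ] H)).orthogonalProjectionOnto φ,
            Ring.inverse (((LinearMap.ker (A : H →ₗ[ℂ] H)).orthogonalProjectionOnto).comp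
                (B.comp (LinearMap.ker (A : H →ₗ[ℂ] H)).subtypeL))
              ((LinearMap.ker (A : H →ₗ[ℂ] H)).orthogonalProjectionOnto ψ)⟫_ℂ) := by
  set K := LinearMap.ker (A : H →ₗ[ℂ] H) with hK
  have hcoerT : ∀ lam : ℝ, 0 ≤ lam → ∀ f : H,
      c * ‖f‖ ^ 2 ≤ (⟪f, ((lam : ℂ) • A + B) f⟫_ℂ).re := by
    intro lam hlam f
    have h0 : ((lam : ℂ) • A + B) f = (lam : ℂ) • A f + B f := rfl
    rw [h0, inner_add_right, inner_smul_right, Complex.add_re, Complex.mul_re]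
    simp only [Complex.ofReal_re, Complex.ofReal_im, zero_mul, sub_zero]
    have h1 := hApos f
    have h2 := hB f
    nlinarith
  have hi : ∀ lam : ℝ, 0 ≤ lam → IsUnit ((lam : ℂ) • A + B) :=
    fun lam hlam => coercive_isUnit _ hc (hcoerT lam hlam)
  have hcoerS : ∀ g : K,
      c * ‖g‖ ^ 2 ≤ (⟪g, ((K.orthogonalProjectionOnto).comp (B.comp K.subtypeL)) g⟫_ℂ).re := by
    intro g
    have hw : (B (g : H)) - (K.orthogonalProjectionOnto (B (g : H)) : H) ∈ Kᗮ :=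
      Submodule.sub_starProjection_mem_orthogonal _
    have h0 : ⟪(g : H), B (g : H) - (K.orthogonalProjectionOnto (B (g : H)) : H)⟫_ℂ = 0 :=
      (Submodule.mem_orthogonal K _).mp hw _ g.2
    rw [inner_sub_right] at h0
    have h1 : ⟪g, ((K.orthogonalProjectionOnto).comp (B.comp K.subtypeL)) g⟫_ℂ
        = ⟪(g : H), B (g : H)⟫_ℂ := by
      have hSg : ((K.orthogonalProjectionOnto).comp (B.comp K.subtypeL)) g
          = K.orthogonalProjectionOnto (B (g : H)) := by
        simp [ContinuousLinearMap.comp_apply, Submodule.subtypeL_apply]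
      rw [hSg, Submodule.coe_inner]
      exact (sub_eq_zero.mp h0).symm
    rw [h1]
    have h2 := hB (g : H)
    simpa using h2
  have hii : IsUnit ((K.orthogonalProjectionOnto).comp (B.comp K.subtypeL)) :=
    coercive_isUnit _ hc hcoerS
  refine ⟨hi, hii, ?_⟩
  intro φ ψ
  set S := (K.orthogonalProjectionOnto).comp (B.comp K.subtypeL) with hS
  set u : K := Ring.inverse S (K.orthogonalProjectionOnto ψ) with hu
  set r : H := ψ - B (u : H) with hr
  have hAu : A (u : H) = 0 := u.2
  have hinv_eq : ∀ lam : ℝ, 0 ≤ lam →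
      Ring.inverse ((lam : ℂ) • A + B) ψ = (u : H) + Ring.inverse ((lam : ℂ) • A + B) r := by
    intro lam hlam
    have hT := hi lam hlam
    have h1 : ψ = ((lam : ℂ) • A + B) (u : H) + r := by
      have h2 : ((lam : ℂ) • A + B) (u : H) = B (u : H) := by
        simp [ContinuousLinearMap.add_apply, hAu]
      rw [h2, hr]; abel
    calc Ring.inverse ((lam : ℂ) • A + B) ψ
        = Ring.inverse ((lam : ℂ) • A + B) (((lam : ℂ) • A + B) (u : H) + r) := by rw [← h1]
    _ = (u : H) + Ring.inverse ((lam : ℂ) • A + B) r := by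
        rw [map_add, coercive_inverse_apply _ hT]
  have hPr : K.orthogonalProjectionOnto r = 0 := by
    have h2 : S u = K.orthogonalProjectionOnto ψ := coercive_apply_inverse S hii _
    rw [hS] at h2
    simp only [ContinuousLinearMap.comp_apply, Submodule.subtypeL_apply] at h2
    rw [hr, map_sub, h2, sub_self]
  have hrorth : r ∈ Kᗮ := Submodule.orthogonalProjectionOnto_eq_zero_iff.mp hPr
  have hnorm : ∀ f : H, ‖A f‖ = ‖ContinuousLinearMap.adjoint A f‖ := by
    intro f
    have e1 : ((‖A f‖ : ℂ)) ^ 2 = ((‖ContinuousLinearMap.adjoint A f‖ : ℂ)) ^ 2 := by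
      calc ((‖A f‖ : ℂ)) ^ 2 = ⟪A f, A f⟫_ℂ := (inner_self_eq_norm_sq_to_K (A f)).symm
      _ = ⟪f, (ContinuousLinearMap.adjoint A) (A f)⟫_ℂ :=
            (ContinuousLinearMap.adjoint_inner_right A f (A f)).symm
      _ = ⟪f, ((ContinuousLinearMap.adjoint A).comp A) f⟫_ℂ := rfl
      _ = ⟪f, (A.comp (ContinuousLinearMap.adjoint A)) f⟫_ℂ := by rw [hAnormal]
      _ = ⟪f, A ((ContinuousLinearMap.adjoint A) f)⟫_ℂ := rfl
      _ = ⟪(ContinuousLinearMap.adjoint A) f, (ContinuousLinearMap.adjoint A) f⟫_ℂ :=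
            (ContinuousLinearMap.adjoint_inner_left A ((ContinuousLinearMap.adjoint A) f) f).symm
      _ = ((‖ContinuousLinearMap.adjoint A f‖ : ℂ)) ^ 2 :=
            inner_self_eq_norm_sq_to_K _
    have e2 : ‖A f‖ ^ 2 = ‖ContinuousLinearMap.adjoint A f‖ ^ 2 := by
      exact_mod_cast e1
    rw [← Real.sqrt_sq (norm_nonneg (A f)), ← Real.sqrt_sq
      (norm_nonneg (ContinuousLinearMap.adjoint A f)), e2]
  have hker_eq : K = LinearMap.ker (ContinuousLinearMap.adjoint A : H →ₗ[ℂ] H) := by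
    ext f
    simp only [hK, LinearMap.mem_ker, ContinuousLinearMap.coe_coe]
    constructor
    · intro hf
      have := hnorm f; rw [hf, norm_zero] at this
      exact norm_eq_zero.mp this.symm
    · intro hf
      have := hnorm f; rw [hf, norm_zero] at this
      exact norm_eq_zero.mp this
  have horth_range : (LinearMap.range (A : H →ₗ[ℂ] H))ᗮ = LinearMap.ker (ContinuousLinearMap.adjoint A : H →ₗ[ℂ] H) := by
    ext f
    simp only [Submodule.mem_orthogonal, LinearMap.mem_ker, ContinuousLinearMap.coe_coe]
    constructor
    · intro hf
      have h1 : ⟪A ((ContinuousLinearMap.adjoint A) f), f⟫_ℂ = 0 :=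
        hf _ (LinearMap.mem_range_self _ _)
      have h2 : ⟪(ContinuousLinearMap.adjoint A) f, (ContinuousLinearMap.adjoint A) f⟫_ℂ = 0 := by
        rw [ContinuousLinearMap.adjoint_inner_right]; exact h1
      exact inner_self_eq_zero.mp h2
    · rintro hf u ⟨y, rfl⟩
      calc ⟪A y, f⟫_ℂ = ⟪y, (ContinuousLinearMap.adjoint A) f⟫_ℂ :=
            (ContinuousLinearMap.adjoint_inner_right A y f).symm
      _ = 0 := by rw [hf, inner_zero_right]
  have hrmem : r ∈ (LinearMap.range (A : H →ₗ[ℂ] H)).topologicalClosure := by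
    have hKA : (LinearMap.range (A : H →ₗ[ℂ] H))ᗮ = K := by rw [horth_range, ← hker_eq]
    rw [← Submodule.orthogonal_orthogonal_eq_closure, hKA]
    exact hrorth
  have hlim : Tendsto (fun lam : ℝ => Ring.inverse ((lam : ℂ) • A + B) r) atTop (𝓝 0) := by
    rw [NormedAddCommGroup.tendsto_nhds_zero]
    intro ε hε
    have hrcl : r ∈ closure ((LinearMap.range (A : H →ₗ[ℂ] H) : Submodule ℂ H) : Set H) := by
      rw [← Submodule.topologicalClosure_coe]; exact hrmem
    obtain ⟨w, hw, hwr⟩ := Metric.mem_closure_iff.mp hrcl (ε * c / 2) (by positivity)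
    obtain ⟨v, rfl⟩ := hw
    set X : ℝ := ‖v‖ + c⁻¹ * ‖B v‖ with hX
    have hX0 : 0 ≤ X := by positivity
    filter_upwards [eventually_ge_atTop (max 1 (2 * (X + 1) / ε))] with lam hlam
    have hlam1 : (1 : ℝ) ≤ lam := le_trans (le_max_left _ _) hlam
    have hlam2 : 2 * (X + 1) / ε ≤ lam := le_trans (le_max_right _ _) hlam
    have hlam0 : 0 < lam := lt_of_lt_of_le one_pos hlam1
    have hT := hi lam hlam0.le
    have hcoer := hcoerT lam hlam0.le
    -- identity for Ring.inverse T (A v)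
    have hlamne : (lam : ℂ) ≠ 0 := by exact_mod_cast hlam0.ne'
    have hkey : Ring.inverse ((lam : ℂ) • A + B) (A v)
        = ((lam : ℂ))⁻¹ • (v - Ring.inverse ((lam : ℂ) • A + B) (B v)) := by
      have hTx : ((lam : ℂ) • A + B) (((lam : ℂ))⁻¹ • (v - Ring.inverse ((lam : ℂ) • A + B) (B v)))
          = A v := by
        rw [map_smul, map_sub, coercive_apply_inverse _ hT]
        have h9 : ((lam : ℂ) • A + B) v = (lam : ℂ) • A v + B v := rfl
        rw [h9, add_sub_cancel_right, smul_smul, inv_mul_cancel₀ hlamne, one_smul]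
      rw [← hTx, coercive_inverse_apply _ hT]
    have hb1 : ‖Ring.inverse ((lam : ℂ) • A + B) (r - A v)‖ ≤ c⁻¹ * ‖r - A v‖ :=
      coercive_inverse_norm_le _ hc hcoer _
    have hb2 : ‖Ring.inverse ((lam : ℂ) • A + B) (A v)‖ ≤ lam⁻¹ * X := by
      rw [hkey, norm_smul]
      have h4 : ‖v - Ring.inverse ((lam : ℂ) • A + B) (B v)‖ ≤ X := by
        refine (norm_sub_le _ _).trans ?_
        rw [hX]
        have := coercive_inverse_norm_le _ hc hcoer (B v)
        linarith
      have h5 : ‖((lam : ℂ))⁻¹‖ = lam⁻¹ := by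
        rw [norm_inv, Complex.norm_real, Real.norm_eq_abs, abs_of_pos hlam0]
      rw [h5]
      exact mul_le_mul_of_nonneg_left h4 (inv_pos.mpr hlam0).le
    have hsplit : Ring.inverse ((lam : ℂ) • A + B) r
        = Ring.inverse ((lam : ℂ) • A + B) (r - A v)
          + Ring.inverse ((lam : ℂ) • A + B) (A v) := by
      rw [← map_add]; congr 1; abel
    rw [hsplit]
    have hd : ‖r - A v‖ < ε * c / 2 := by
      rw [← dist_eq_norm]; exact hwr
    have hhalf1 : c⁻¹ * ‖r - A v‖ < ε / 2 := by
      have := mul_lt_mul_of_pos_left hd (inv_pos.mpr hc)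
      calc c⁻¹ * ‖r - A v‖ < c⁻¹ * (ε * c / 2) := this
      _ = ε / 2 := by field_simp
    have hhalf2 : lam⁻¹ * X < ε / 2 := by
      have h8 : 2 * (X + 1) ≤ ε * lam := by
        rw [div_le_iff₀ hε] at hlam2; linarith
      rw [inv_mul_eq_div, div_lt_iff₀ hlam0]
      ring_nf
      ring_nf at h8
      linarith
    calc ‖Ring.inverse ((lam : ℂ) • A + B) (r - A v)
          + Ring.inverse ((lam : ℂ) • A + B) (A v)‖
        ≤ ‖Ring.inverse ((lam : ℂ) • A + B) (r - A v)‖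
          + ‖Ring.inverse ((lam : ℂ) • A + B) (A v)‖ := norm_add_le _ _
    _ < ε / 2 + ε / 2 := add_lt_add (lt_of_le_of_lt hb1 hhalf1) (lt_of_le_of_lt hb2 hhalf2)
    _ = ε := by ring
  have hmain : Tendsto (fun lam : ℝ => ⟪φ, (u : H) + Ring.inverse ((lam : ℂ) • A + B) r⟫_ℂ)
      atTop (𝓝 ⟪K.orthogonalProjectionOnto φ, u⟫_ℂ) := by
    have h1 : Tendsto (fun lam : ℝ => ⟪φ, Ring.inverse ((lam : ℂ) • A + B) r⟫_ℂ)
        atTop (𝓝 (0 : ℂ)) := by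
      have := Tendsto.inner (𝕜 := ℂ) (tendsto_const_nhds (x := φ)) hlim
      simpa using this
    have h2 : ⟪K.orthogonalProjectionOnto φ, u⟫_ℂ = ⟪φ, (u : H)⟫_ℂ + 0 := by
      rw [add_zero]
      have hw : φ - (K.orthogonalProjectionOnto φ : H) ∈ Kᗮ :=
        Submodule.sub_starProjection_mem_orthogonal _
      have h0 : ⟪φ - (K.orthogonalProjectionOnto φ : H), (u : H)⟫_ℂ = 0 :=
        (Submodule.mem_orthogonal' K _).mp hw _ u.2
      rw [inner_sub_left] at h0
      rw [Submodule.coe_inner]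
      exact (sub_eq_zero.mp h0).symm
    rw [h2]
    simpa [inner_add_right] using (tendsto_const_nhds (x := ⟪φ, (u : H)⟫_ℂ)).add h1
  refine Tendsto.congr' ?_ hmain
  filter_upwards [eventually_ge_atTop (0 : ℝ)] with lam hlam
  rw [hinv_eq lam hlam]
end

section
/- Let H be a complex Hilbert space and let A and B be bounded linear operators on H with Re⟨f, A f⟩ ≥ 0 for all f ∈ H and Re⟨f, B f⟩ ≥ c‖f‖² for all f ∈ H, where c > 0. Then for every λ > 0 the operator λA + B is boundedly invertible, ‖(λA + B)⁻¹‖ ≤ 1/c, and ‖A (λA + B)⁻¹‖ ≤ (1 + ‖B‖/c)/λ. -/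
open scoped InnerProductSpace

/-- If `A`, `B` are bounded operators on a complex Hilbert space with
`Re⟪f, A f⟫ ≥ 0` and `Re⟪f, B f⟫ ≥ c‖f‖²` for all `f`, where `c > 0`, then for every `λ > 0`
the operator `λA + B` is boundedly invertible, `‖(λA + B)⁻¹‖ ≤ 1/c`, and
`‖A (λA + B)⁻¹‖ ≤ (1 + ‖B‖/c)/λ`. -/
theorem stmt_3 {H : Type*} [NormedAddCommGroup H] [InnerProductSpace ℂ H] [CompleteSpace H]
    (A B : H →L[ℂ] H) (c : ℝ) (hc : 0 < c)
    (hA : ∀ f : H, 0 ≤ (⟪f, A f⟫_ℂ).re)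
    (hB : ∀ f : H, c * ‖f‖ ^ 2 ≤ (⟪f, B f⟫_ℂ).re) :
    ∀ lam : ℝ, 0 < lam →
      IsUnit ((lam : ℂ) • A + B) ∧
      ‖Ring.inverse ((lam : ℂ) • A + B)‖ ≤ 1 / c ∧
      ‖A.comp (Ring.inverse ((lam : ℂ) • A + B))‖ ≤ (1 + ‖B‖ / c) / lam := by
  intro lam hlam
  set T : H →L[ℂ] H := (lam : ℂ) • A + B with hT
  -- coercivity of T
  have hcoer : ∀ f : H, c * ‖f‖ ^ 2 ≤ (⟪f, T f⟫_ℂ).re := by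
    intro f
    have : ⟪f, T f⟫_ℂ = (lam : ℂ) * ⟪f, A f⟫_ℂ + ⟪f, B f⟫_ℂ := by
      rw [hT]
      simp only [ContinuousLinearMap.add_apply, ContinuousLinearMap.coe_smul',
        Pi.smul_apply, inner_add_right, inner_smul_right]
    rw [this]
    have : ((lam : ℂ) * ⟪f, A f⟫_ℂ).re = lam * (⟪f, A f⟫_ℂ).re := by
      simp [Complex.mul_re]
    rw [Complex.add_re, this]
    have h1 : 0 ≤ lam * (⟪f, A f⟫_ℂ).re := mul_nonneg hlam.le (hA f)
    linarith [hB f]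
  -- lower bound ‖f‖ ≤ c⁻¹ * ‖T f‖
  have hlow : ∀ f : H, c * ‖f‖ ≤ ‖T f‖ := by
    intro f
    rcases eq_or_ne f 0 with rfl | hf
    · simp
    · have h0 : 0 < ‖f‖ := norm_pos_iff.mpr hf
      have h1 : c * ‖f‖ ^ 2 ≤ ‖f‖ * ‖T f‖ := by
        calc c * ‖f‖ ^ 2 ≤ (⟪f, T f⟫_ℂ).re := hcoer f
          _ ≤ ‖⟪f, T f⟫_ℂ‖ := Complex.re_le_norm _
          _ ≤ ‖f‖ * ‖T f‖ := norm_inner_le_norm _ _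
      have := (mul_le_mul_iff_right₀ h0).mp (by linarith [h1] : ‖f‖ * (c * ‖f‖) ≤ ‖f‖ * ‖T f‖)
      exact this
  have hbound : ∀ f : H, ‖f‖ ≤ c⁻¹ * ‖T f‖ := by
    intro f
    rw [le_inv_mul_iff₀ hc]
    exact hlow f
  have hanti : AntilipschitzWith (⟨c⁻¹, by positivity⟩ : NNReal) T :=
    ContinuousLinearMap.antilipschitz_of_bound T hbound
  -- injectivity
  have hker : LinearMap.ker (T : H →ₗ[ℂ] H) = ⊥ := by
    exact LinearMap.ker_eq_bot.mpr hanti.injective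
  -- closed range
  have hclosed : IsClosed ((LinearMap.range (T : H →ₗ[ℂ] H) : Submodule ℂ H) : Set H) := by
    have := hanti.isClosed_range T.uniformContinuous
    simpa [Set.range, LinearMap.coe_range] using this
  haveI : CompleteSpace (LinearMap.range (T : H →ₗ[ℂ] H) : Submodule ℂ H) :=
    hclosed.completeSpace_coe
  -- surjectivity
  have hrange : LinearMap.range (T : H →ₗ[ℂ] H) = ⊤ := by
    rw [← Submodule.orthogonal_eq_bot_iff]
    ext g
    simp only [Submodule.mem_bot, Submodule.mem_orthogonal]
    constructor
    · intro hg
      have h0 : ⟪T g, g⟫_ℂ = 0 := hg (T g) (LinearMap.mem_range_self _ g)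
      have h0' : ⟪g, T g⟫_ℂ = 0 := by
        rw [← inner_conj_symm, h0, map_zero]
      have := hcoer g
      rw [h0'] at this
      simp only [Complex.zero_re] at this
      have h2 : ‖g‖ ^ 2 = 0 := le_antisymm (by nlinarith) (sq_nonneg _)
      have h3 : ‖g‖ = 0 := pow_eq_zero_iff (by norm_num) |>.mp h2
      exact norm_eq_zero.mp h3
    · rintro rfl u _; simp
  -- the equivalence
  set e := ContinuousLinearEquiv.ofBijective T hker hrange with he
  have hunit : IsUnit T := by
    refine ⟨⟨T, (e.symm : H →L[ℂ] H), ?_, ?_⟩, rfl⟩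
    · ext x
      simp only [ContinuousLinearMap.mul_apply, ContinuousLinearMap.one_apply,
        ContinuousLinearMap.coe_coe]
      exact ContinuousLinearEquiv.ofBijective_apply_symm_apply T hker hrange x
    · ext x
      simp only [ContinuousLinearMap.mul_apply, ContinuousLinearMap.one_apply,
        ContinuousLinearMap.coe_coe]
      exact ContinuousLinearEquiv.ofBijective_symm_apply_apply T hker hrange x
  have hinv : Ring.inverse T = (e.symm : H →L[ℂ] H) := by
    rcases hunit with ⟨u, hu⟩
    have : Ring.inverse T = Ring.inverse (⟨T, (e.symm : H →L[ℂ] H), by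
      ext x
      simp only [ContinuousLinearMap.mul_apply, ContinuousLinearMap.one_apply,
        ContinuousLinearMap.coe_coe]
      exact ContinuousLinearEquiv.ofBijective_apply_symm_apply T hker hrange x, by
      ext x
      simp only [ContinuousLinearMap.mul_apply, ContinuousLinearMap.one_apply,
        ContinuousLinearMap.coe_coe]
      exact ContinuousLinearEquiv.ofBijective_symm_apply_apply T hker hrange x⟩ :
        (H →L[ℂ] H)ˣ).val := rfl
    rw [this, Ring.inverse_unit]
    rfl
  have hinvnorm : ‖Ring.inverse T‖ ≤ 1 / c := by
    rw [hinv]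
    refine ContinuousLinearMap.opNorm_le_bound _ (by positivity) fun y => ?_
    have := hbound (e.symm y)
    have hTy : T (e.symm y) = y := ContinuousLinearEquiv.ofBijective_apply_symm_apply T hker hrange y
    rw [hTy] at this
    simpa [one_div] using this
  refine ⟨hunit, hinvnorm, ?_⟩
  -- third bound
  set S := Ring.inverse T with hS
  have hTS : T * S = 1 := Ring.mul_inverse_cancel T hunit
  have key : (lam : ℂ) • (A.comp S) = 1 - B.comp S := by
    have : ((lam : ℂ) • A).comp S + B.comp S = T.comp S := by
      rw [hT]; ext x; simp [ContinuousLinearMap.add_comp]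
    have hTS' : T.comp S = 1 := hTS
    rw [hTS'] at this
    have := congrArg (fun X => X - B.comp S) this
    simp only [add_sub_cancel_right] at this
    rw [← this]
    ext x; simp
  have hnorm : lam * ‖A.comp S‖ ≤ 1 + ‖B‖ / c := by
    have h1 : ‖(lam : ℂ) • (A.comp S)‖ = lam * ‖A.comp S‖ := by
      rw [norm_smul]; simp [abs_of_pos hlam]
    calc lam * ‖A.comp S‖ = ‖(1 : H →L[ℂ] H) - B.comp S‖ := by rw [← h1, key]
      _ ≤ ‖(1 : H →L[ℂ] H)‖ + ‖B.comp S‖ := norm_sub_le _ _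
      _ ≤ 1 + ‖B‖ * ‖S‖ := by
          gcongr
          · exact ContinuousLinearMap.norm_id_le
          · exact ContinuousLinearMap.opNorm_comp_le _ _
      _ ≤ 1 + ‖B‖ * (1 / c) := by
          have h2 : ‖S‖ ≤ 1 / c := hinvnorm
          gcongr
      _ = 1 + ‖B‖ / c := by ring
  rw [le_div_iff₀ hlam]
  linarith [hnorm]
end

section
/- Let d ≥ 1, let h : ℤᵈ → ℂ satisfy h(0) = 0 and m := Σ_{ζ∈ℤᵈ} (1 + |ζ|)|h(ζ)| < ∞, and let H₀ be the bounded operator on ℓ²(ℤᵈ) given by (H₀ψ)(x) = Σ_{y∈ℤᵈ} h(x − y) ψ(y). Fix s ∈ ℝ and let v : ℝ × ℤᵈ → ℝ be bounded, with V(t) the multiplication operator (V(t)ψ)(x) = v(t, x)ψ(x). Suppose U : ℝ → (bounded operators on ℓ²(ℤᵈ)) satisfies U(s) = Id and, for every ψ ∈ ℓ²(ℤᵈ), the map t ↦ U(t)ψ is differentiable with derivative (d/dt)U(t)ψ = −i (H₀ + V(t)) U(t)ψ for all t ∈ ℝ. Then for every t ∈ ℝ and every ψ ∈ ℓ²(ℤᵈ)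 with Σ_{x} (1 + |x|)² |ψ(x)|² < ∞, one has Σ_{x} (1 + |x|)² |(U(t)ψ)(x)|² ≤ e^{2m|t−s|} Σ_{x} (1 + |x|)² |ψ(x)|². -/
noncomputable def latticeNorm {d : ℕ} (x : Fin d → ℤ) : ℝ :=
  Real.sqrt (∑ j, ((x j : ℝ)) ^ 2)


variable {d : ℕ}

lemma latticeNorm_eq (x : Fin d → ℤ) :
    latticeNorm x = ‖(WithLp.equiv 2 (Fin d → ℝ)).symm (fun j => (x j : ℝ))‖ := by
  rw [EuclideanSpace.norm_eq]
  simp [latticeNorm, Real.norm_eq_abs, sq_abs]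

lemma latticeNorm_nonneg (x : Fin d → ℤ) : 0 ≤ latticeNorm x := Real.sqrt_nonneg _

lemma latticeNorm_triangle (x y : Fin d → ℤ) :
    latticeNorm x ≤ latticeNorm (x - y) + latticeNorm y := by
  rw [latticeNorm_eq, latticeNorm_eq, latticeNorm_eq]
  have : (WithLp.equiv 2 (Fin d → ℝ)).symm (fun j => (x j : ℝ)) =
      (WithLp.equiv 2 (Fin d → ℝ)).symm (fun j => ((x - y) j : ℝ)) +
      (WithLp.equiv 2 (Fin d → ℝ)).symm (fun j => (y j : ℝ)) := by
    ext j
    simp [Pi.sub_apply]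
  rw [this]
  exact norm_add_le _ _


lemma memℓp_two_iff (f : ι → ℂ) : Memℓp f 2 ↔ Summable (fun x => ‖f x‖ ^ 2) := by
  rw [memℓp_gen_iff (by norm_num : (0:ℝ) < (2:ENNReal).toReal)]
  norm_num

lemma lp_norm_sq_eq (f : lp (fun _ : ι => ℂ) 2) : ‖f‖ ^ 2 = ∑' x, ‖f x‖ ^ 2 := by
  have := lp.norm_rpow_eq_tsum (by norm_num : (0:ℝ) < (2:ENNReal).toReal) f
  norm_num at this
  rw [← Real.rpow_natCast ‖f‖ 2]
  norm_num [this]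

lemma lp_summable_norm_sq (f : lp (fun _ : ι => ℂ) 2) : Summable (fun x => ‖f x‖ ^ 2) :=
  (memℓp_two_iff _).mp (lp.memℓp f)
section mulop
variable (w : ι → ℝ) (R : ℝ) (hR : 0 ≤ R) (hw : ∀ x, |w x| ≤ R)

lemma norm_real_mul (a : ℝ) (z : ℂ) : ‖(a : ℂ) * z‖ = |a| * ‖z‖ := by
  rw [norm_mul, Complex.norm_real, Real.norm_eq_abs]

include hw in
lemma mul_memℓp (ψ : lp (fun _ : ι => ℂ) 2) :
    Memℓp (fun x => (w x : ℂ) * ψ x) 2 := by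
  rw [memℓp_two_iff]
  have hb : ∀ x, ‖(w x : ℂ) * ψ x‖ ^ 2 ≤ R ^ 2 * ‖ψ x‖ ^ 2 := by
    intro x
    rw [norm_real_mul, mul_pow]
    have : |w x| ^ 2 ≤ R ^ 2 := by
      apply sq_le_sq' _ (hw x); linarith [abs_nonneg (w x), hw x]
    exact mul_le_mul_of_nonneg_right this (by positivity)
  exact Summable.of_nonneg_of_le (fun x => by positivity) hb
    ((lp_summable_norm_sq ψ).mul_left _)

include hR in
lemma mul_norm_le (ψ : lp (fun _ : ι => ℂ) 2) :
    ‖(⟨fun x => (w x : ℂ) * ψ x, mul_memℓp w R hw ψ⟩ : lp (fun _ : ι => ℂ) 2)‖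
      ≤ R * ‖ψ‖ := by
  have h2 : (0:ℝ) ≤ R * ‖ψ‖ := by positivity
  rw [← pow_le_pow_iff_left₀ (norm_nonneg _) h2 (two_ne_zero), lp_norm_sq_eq, mul_pow]
  calc ∑' x, ‖(w x : ℂ) * ψ x‖ ^ 2 ≤ ∑' x, R ^ 2 * ‖ψ x‖ ^ 2 := by
        apply Summable.tsum_le_tsum _ ((memℓp_two_iff _).mp (mul_memℓp w R hw ψ))
          ((lp_summable_norm_sq ψ).mul_left _)
        intro x
        rw [norm_real_mul, mul_pow]
        have : |w x| ^ 2 ≤ R ^ 2 := by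
          apply sq_le_sq' _ (hw x); linarith [abs_nonneg (w x), hw x]
        exact mul_le_mul_of_nonneg_right this (by positivity)
    _ = R ^ 2 * ‖ψ‖ ^ 2 := by rw [tsum_mul_left, lp_norm_sq_eq]

noncomputable def mulOp : lp (fun _ : ι => ℂ) 2 →L[ℂ] lp (fun _ : ι => ℂ) 2 :=
  LinearMap.mkContinuous
    { toFun := fun ψ => ⟨fun x => (w x : ℂ) * ψ x, mul_memℓp w R hw ψ⟩
      map_add' := fun ψ φ => by
        ext x
        change (w x : ℂ) * ((ψ + φ) x) = _
        rw [lp.coeFn_add]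
        change _ = (w x : ℂ) * ψ x + (w x : ℂ) * φ x
        simp [mul_add]
      map_smul' := fun c ψ => by
        ext x
        change (w x : ℂ) * ((c • ψ) x) = _
        rw [lp.coeFn_smul]
        change _ = c • ((w x : ℂ) * ψ x)
        simp; ring }
    R (fun ψ => mul_norm_le w R hR hw ψ)

lemma mulOp_apply (ψ : lp (fun _ : ι => ℂ) 2) (x : ι) :
    mulOp w R hR hw ψ x = (w x : ℂ) * ψ x := rfl

end mulop

section grp
variable {ι : Type*} [AddCommGroup ι]

lemma summable_shift {a : ι → ℝ} (ha : Summable a) (x : ι) :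
    Summable fun y => a (x - y) :=
  ((Equiv.subLeft x).summable_iff (f := a)).mpr ha

lemma tsum_shift (a : ι → ℝ) (x : ι) : ∑' y, a (x - y) = ∑' ζ, a ζ :=
  (Equiv.subLeft x).tsum_eq a

lemma key1 {a : ι → ℝ} {m : ℝ} (ha0 : ∀ ζ, 0 ≤ a ζ)
    (hm : HasSum a m) {G : ι → ℝ} (hG0 : ∀ x, 0 ≤ G x)
    (hG : Summable fun x => G x ^ 2) :
    Summable (fun x => G x * ∑' y, a (x - y) * G y) ∧
    (∑' x, G x * ∑' y, a (x - y) * G y) ≤ m * ∑' x, G x ^ 2 := by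
  set SG := ∑' x, G x ^ 2 with hSG
  have hSG0 : 0 ≤ SG := tsum_nonneg (fun x => sq_nonneg _)
  have f1 : ∀ ζ, a ζ ≤ m := fun ζ => le_hasSum hm ζ (fun _ _ => ha0 _)
  have f2 : ∀ x, Summable fun y => a (x - y) := summable_shift hm.summable
  have f2' : ∀ x, ∑' y, a (x - y) = m := fun x => by
    rw [tsum_shift a x, hm.tsum_eq]
  have hK : ∀ y, G y ≤ Real.sqrt SG := fun y => by
    rw [← Real.sqrt_sq (hG0 y)]
    exact Real.sqrt_le_sqrt (Summable.le_tsum hG y (fun _ _ => sq_nonneg _))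
  have f3 : ∀ x, Summable (fun y => a (x - y) * G y) := fun x => by
    apply Summable.of_nonneg_of_le (fun y => mul_nonneg (ha0 _) (hG0 _))
      (fun y => mul_le_mul_of_nonneg_left (hK y) (ha0 _)) ((f2 x).mul_right _)
  have f4 : ∀ x, Summable (fun y => a (x - y) * G y ^ 2) := fun x => by
    apply Summable.of_nonneg_of_le (fun y => mul_nonneg (ha0 _) (sq_nonneg _))
      (fun y => mul_le_mul_of_nonneg_right (f1 _) (sq_nonneg _)) (hG.mul_left m)
  set c : ι → ℝ := fun x => ∑' y, a (x - y) * G y ^ 2 with hc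
  have f5 : ∀ x, G x * ∑' y, a (x - y) * G y ≤ (m * G x ^ 2 + c x) / 2 := by
    intro x
    rw [← tsum_mul_left]
    have hrhs : (m * G x ^ 2 + c x) / 2
        = ∑' y, (a (x - y) * G x ^ 2 + a (x - y) * G y ^ 2) / 2 := by
      rw [tsum_div_const, Summable.tsum_add ((f2 x).mul_right _) (f4 x), tsum_mul_right, f2' x]
    rw [hrhs]
    apply Summable.tsum_le_tsum _ ((f3 x).mul_left _)
      ((((f2 x).mul_right _).add (f4 x)).div_const 2)
    intro y
    nlinarith [sq_nonneg (G x - G y), ha0 (x - y), hG0 x, hG0 y, sq_nonneg (G x + G y)]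
  have f6 : ∀ S : Finset ι, ∑ x ∈ S, (m * G x ^ 2 + c x) / 2 ≤ m * SG := by
    intro S
    have hm0 : 0 ≤ m := hm.tsum_eq ▸ tsum_nonneg ha0
    have e1 : ∑ x ∈ S, G x ^ 2 ≤ SG := Summable.sum_le_tsum S (fun _ _ => sq_nonneg _) hG
    have e2 : ∑ x ∈ S, c x ≤ m * SG := by
      have swap : ∑ x ∈ S, c x = ∑' y, ∑ x ∈ S, a (x - y) * G y ^ 2 :=
        (Summable.tsum_finsetSum (fun x _ => f4 x)).symm
      rw [swap]
      have hsum : Summable (fun y => ∑ x ∈ S, a (x - y) * G y ^ 2) :=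
        summable_sum (fun x _ => f4 x)
      calc ∑' y, ∑ x ∈ S, a (x - y) * G y ^ 2
          ≤ ∑' y, m * G y ^ 2 := by
            apply Summable.tsum_le_tsum _ hsum (hG.mul_left m)
            intro y
            rw [← Finset.sum_mul]
            apply mul_le_mul_of_nonneg_right _ (sq_nonneg _)
            calc ∑ x ∈ S, a (x - y)
                ≤ ∑' x, a (x - y) := Summable.sum_le_tsum S (fun _ _ => ha0 _)
                  (((Equiv.subRight y).summable_iff (f := a)).mpr hm.summable)
              _ = ∑' ζ, a ζ := (Equiv.subRight y).tsum_eq a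
              _ = m := hm.tsum_eq
        _ = m * SG := tsum_mul_left
    calc ∑ x ∈ S, (m * G x ^ 2 + c x) / 2
        = (m * ∑ x ∈ S, G x ^ 2 + ∑ x ∈ S, c x) / 2 := by
          rw [Finset.mul_sum, ← Finset.sum_add_distrib, Finset.sum_div]
      _ ≤ (m * SG + m * SG) / 2 := by
          have := mul_le_mul_of_nonneg_left e1 hm0
          linarith
      _ = m * SG := by ring
  have hfin : ∀ S : Finset ι, ∑ x ∈ S, G x * ∑' y, a (x - y) * G y ≤ m * SG := by
    intro S
    calc ∑ x ∈ S, G x * ∑' y, a (x - y) * G y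
        ≤ ∑ x ∈ S, (m * G x ^ 2 + c x) / 2 := Finset.sum_le_sum (fun x _ => f5 x)
      _ ≤ m * SG := f6 S
  have hpos : ∀ x, 0 ≤ G x * ∑' y, a (x - y) * G y := fun x =>
    mul_nonneg (hG0 x) (tsum_nonneg (fun y => mul_nonneg (ha0 _) (hG0 _)))
  have hsummable : Summable (fun x => G x * ∑' y, a (x - y) * G y) :=
    summable_of_sum_le hpos hfin
  exact ⟨hsummable, Summable.tsum_le_of_sum_le hsummable hfin⟩
end grp
section grp2
variable {ι : Type*} [AddCommGroup ι]

lemma summable_a_mul {a : ι → ℝ} (ha : Summable a) (ha0 : ∀ ζ, 0 ≤ a ζ)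
    {G : ι → ℝ} (hG0 : ∀ x, 0 ≤ G x) (hG : Summable fun x => G x ^ 2) (x : ι) :
    Summable fun y => a (x - y) * G y := by
  have hK : ∀ y, G y ≤ Real.sqrt (∑' x, G x ^ 2) := fun y => by
    rw [← Real.sqrt_sq (hG0 y)]
    exact Real.sqrt_le_sqrt (Summable.le_tsum hG y (fun _ _ => sq_nonneg _))
  exact Summable.of_nonneg_of_le (fun y => mul_nonneg (ha0 _) (hG0 _))
    (fun y => mul_le_mul_of_nonneg_left (hK y) (ha0 _))
    ((summable_shift ha x).mul_right _)

end grp2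

section main
variable {d : ℕ}
local notation "E" => lp (fun _ : Fin d → ℤ => ℂ) 2

lemma lemA (h : (Fin d → ℤ) → ℂ) {m : ℝ}
    (hm : HasSum (fun ζ : Fin d → ℤ => (1 + latticeNorm ζ) * ‖h ζ‖) m)
    (φ : E) (x : Fin d → ℤ) :
    Summable (fun y => ‖h (x - y)‖ * ‖φ y‖) ∧
      ‖(∑' y : Fin d → ℤ, h (x - y) * φ y)‖ ≤ ∑' y, ‖h (x - y)‖ * ‖φ y‖ := by
  have hh : Summable fun ζ : Fin d → ℤ => ‖h ζ‖ := by
    apply Summable.of_nonneg_of_le (fun ζ => norm_nonneg _) _ hm.summable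
    intro ζ
    nlinarith [latticeNorm_nonneg ζ, norm_nonneg (h ζ)]
  have hφb : ∀ y, ‖φ y‖ ≤ ‖φ‖ := fun y => lp.norm_apply_le_norm two_ne_zero φ y
  have hs : Summable (fun y => ‖h (x - y)‖ * ‖φ y‖) := by
    apply Summable.of_nonneg_of_le (fun y => by positivity)
      (fun y => mul_le_mul_of_nonneg_left (hφb y) (norm_nonneg _))
      ((summable_shift hh x).mul_right _)
  refine ⟨hs, ?_⟩
  have : Summable fun y : Fin d → ℤ => ‖h (x - y) * φ y‖ := by
    simpa [norm_mul] using hs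
  calc ‖(∑' y : Fin d → ℤ, h (x - y) * φ y)‖ ≤ ∑' y, ‖h (x - y) * φ y‖ :=
        norm_tsum_le_tsum_norm this
    _ = ∑' y, ‖h (x - y)‖ * ‖φ y‖ := by simp [norm_mul]

end main
section main2
variable {d : ℕ}
local notation "E" => lp (fun _ : Fin d → ℤ => ℂ) 2

set_option maxHeartbeats 1000000 in
lemma inner_bound (h : (Fin d → ℤ) → ℂ) {m : ℝ}
    (hm : HasSum (fun ζ : Fin d → ℤ => (1 + latticeNorm ζ) * ‖h ζ‖) m)
    (H₀ : E →L[ℂ] E)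
    (hH₀ : ∀ (ψ : E) (x : Fin d → ℤ), H₀ ψ x = ∑' y : Fin d → ℤ, h (x - y) * ψ y)
    (vv : (Fin d → ℤ) → ℝ)
    (w : (Fin d → ℤ) → ℝ) (R : ℝ) (hR : 0 ≤ R) (hw : ∀ x, |w x| ≤ R)
    (hw0 : ∀ x, 0 ≤ w x)
    (hwg : ∀ x y, w x ≤ (1 + latticeNorm (x - y)) * w y)
    (φ χ : E) (hχ : ∀ x, χ x = -Complex.I * ((H₀ φ) x + (vv x : ℂ) * φ x)) :
    |(inner (𝕜 := ℂ) (mulOp w R hR hw φ) (mulOp w R hR hw χ)).re| ≤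
      m * ‖mulOp w R hR hw φ‖ ^ 2 := by
  classical
  set a : (Fin d → ℤ) → ℝ := fun ζ => (1 + latticeNorm ζ) * ‖h ζ‖ with ha_def
  have ha0 : ∀ ζ, 0 ≤ a ζ := fun ζ => by
    have := latticeNorm_nonneg ζ; positivity
  set W := mulOp w R hR hw with hW
  set G : (Fin d → ℤ) → ℝ := fun x => w x * ‖φ x‖ with hG_def
  have hG0 : ∀ x, 0 ≤ G x := fun x => mul_nonneg (hw0 x) (norm_nonneg _)
  have hGW : ∀ x, ‖W φ x‖ = G x := fun x => by
    rw [mulOp_apply, norm_real_mul, abs_of_nonneg (hw0 x)]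
  have hG2 : Summable fun x => G x ^ 2 := by
    have := lp_summable_norm_sq (W φ)
    refine this.congr fun x => by rw [hGW x]
  have hGsum : ∑' x, G x ^ 2 = ‖W φ‖ ^ 2 := by
    rw [lp_norm_sq_eq (W φ)]
    exact tsum_congr fun x => by rw [hGW x]
  -- key bound from key1
  obtain ⟨hBsum, hBle⟩ := key1 ha0 hm hG0 hG2
  set B : (Fin d → ℤ) → ℝ := fun x => G x * ∑' y, a (x - y) * G y with hB_def
  -- pointwise term
  have hterm : ∀ x, (inner (𝕜 := ℂ) (W φ x) (W χ x)).re =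
      w x ^ 2 * (starRingEnd ℂ (φ x) * χ x).re := by
    intro x
    rw [hW, mulOp_apply, mulOp_apply]
    simp only [RCLike.inner_apply]
    rw [map_mul, Complex.conj_ofReal]
    have expand : (starRingEnd ℂ) (φ x) * ((w x : ℂ) * χ x) * (w x:ℂ) =
      (w x:ℂ) ^2 * ((starRingEnd ℂ) (φ x) * χ x) := by ring
    calc ((w x : ℂ) * χ x * ((w x : ℂ) * (starRingEnd ℂ) (φ x))).re
        = (((w x : ℂ))^2 * ((starRingEnd ℂ) (φ x) * χ x)).re := by ring_nf
      _ = w x ^ 2 * ((starRingEnd ℂ) (φ x) * χ x).re := by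
          rw [← Complex.ofReal_pow, Complex.re_ofReal_mul]
  have habs : ∀ x, |(inner (𝕜 := ℂ) (W φ x) (W χ x)).re| ≤ B x := by
    intro x
    rw [hterm x]
    have hsplit : ((starRingEnd ℂ) (φ x) * χ x).re =
        ((starRingEnd ℂ) (φ x) * (-Complex.I * (H₀ φ) x)).re := by
      rw [hχ x]
      have : (starRingEnd ℂ) (φ x) * (-Complex.I * ((H₀ φ) x + (vv x : ℂ) * φ x)) =
          (starRingEnd ℂ) (φ x) * (-Complex.I * (H₀ φ) x) +
          (-Complex.I) * ((vv x : ℂ) * ((starRingEnd ℂ) (φ x) * φ x)) := by ring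
      rw [this, Complex.add_re]
      have hreal : (vv x : ℂ) * ((starRingEnd ℂ) (φ x) * φ x) =
          ((vv x * Complex.normSq (φ x) : ℝ) : ℂ) := by
        rw [mul_comm ((starRingEnd ℂ) (φ x)) (φ x), Complex.mul_conj]
        push_cast
        ring
      rw [hreal]
      simp [Complex.mul_re]
    rw [hsplit]
    have h1 : |((starRingEnd ℂ) (φ x) * (-Complex.I * (H₀ φ) x)).re| ≤
        ‖φ x‖ * ‖(H₀ φ) x‖ := by
      calc |((starRingEnd ℂ) (φ x) * (-Complex.I * (H₀ φ) x)).re|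
          ≤ ‖(starRingEnd ℂ) (φ x) * (-Complex.I * (H₀ φ) x)‖ :=
            Complex.abs_re_le_norm _
        _ = ‖φ x‖ * ‖(H₀ φ) x‖ := by
            rw [norm_mul, norm_mul, norm_neg, Complex.norm_I, one_mul,
              RCLike.norm_conj]
    obtain ⟨hsumA, hleA⟩ := lemA h hm φ x
    have h2 : ‖(H₀ φ) x‖ ≤ ∑' y, ‖h (x - y)‖ * ‖φ y‖ := by
      rw [hH₀ φ x]; exact hleA
    have h3 : |w x ^ 2 * ((starRingEnd ℂ) (φ x) * (-Complex.I * (H₀ φ) x)).re| ≤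
        w x ^ 2 * (‖φ x‖ * ∑' y, ‖h (x - y)‖ * ‖φ y‖) := by
      rw [abs_mul, abs_of_nonneg (sq_nonneg (w x))]
      apply mul_le_mul_of_nonneg_left _ (sq_nonneg _)
      calc |((starRingEnd ℂ) (φ x) * (-Complex.I * (H₀ φ) x)).re|
          ≤ ‖φ x‖ * ‖(H₀ φ) x‖ := h1
        _ ≤ ‖φ x‖ * ∑' y, ‖h (x - y)‖ * ‖φ y‖ :=
            mul_le_mul_of_nonneg_left h2 (norm_nonneg _)
    refine h3.trans ?_
    -- now: w x ^ 2 * ‖φ x‖ * Σ'_y ‖h (x-y)‖‖φ y‖ ≤ G x * Σ'_y a (x-y) G y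
    have lhs_eq : w x ^ 2 * (‖φ x‖ * ∑' y, ‖h (x - y)‖ * ‖φ y‖) =
        ∑' y, w x ^ 2 * ‖φ x‖ * (‖h (x - y)‖ * ‖φ y‖) := by
      rw [tsum_mul_left]; ring
    have rhs_eq : B x = ∑' y, G x * (a (x - y) * G y) := by
      rw [show B x = G x * ∑' y, a (x - y) * G y from rfl, tsum_mul_left]
    rw [lhs_eq, rhs_eq]
    apply Summable.tsum_le_tsum _ (hsumA.mul_left _)
      ((summable_a_mul hm.summable ha0 hG0 hG2 x).mul_left _)
    intro y
    have hwxy := hwg x y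
    have key : w x ^ 2 * ‖h (x - y)‖ ≤ w x * w y * a (x - y) := by
      have h4 : w x * w x ≤ w x * ((1 + latticeNorm (x - y)) * w y) :=
        mul_le_mul_of_nonneg_left hwxy (hw0 x)
      calc w x ^ 2 * ‖h (x - y)‖ = (w x * w x) * ‖h (x - y)‖ := by ring
        _ ≤ (w x * ((1 + latticeNorm (x - y)) * w y)) * ‖h (x - y)‖ :=
            mul_le_mul_of_nonneg_right h4 (norm_nonneg _)
        _ = w x * w y * a (x - y) := by rw [ha_def]; ring
    calc w x ^ 2 * ‖φ x‖ * (‖h (x - y)‖ * ‖φ y‖)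
        = (w x ^ 2 * ‖h (x - y)‖) * (‖φ x‖ * ‖φ y‖) := by ring
      _ ≤ (w x * w y * a (x - y)) * (‖φ x‖ * ‖φ y‖) := by
          apply mul_le_mul_of_nonneg_right key (by positivity)
      _ = G x * (a (x - y) * G y) := by rw [hG_def]; ring
  -- assemble
  have hinner := lp.inner_eq_tsum (𝕜 := ℂ) (W φ) (W χ)
  have hsum_inner := lp.summable_inner (𝕜 := ℂ) (W φ) (W χ)
  have hre : (inner (𝕜 := ℂ) (W φ) (W χ)).re =
      ∑' x, (inner (𝕜 := ℂ) (W φ x) (W χ x)).re := by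
    rw [hinner]
    exact (Complex.reCLM.map_tsum hsum_inner)
  rw [hre]
  have hsum_re : Summable fun x => (inner (𝕜 := ℂ) (W φ x) (W χ x)).re :=
    hsum_inner.map Complex.reCLM Complex.reCLM.continuous
  have habs_sum : Summable fun x => |(inner (𝕜 := ℂ) (W φ x) (W χ x)).re| :=
    hsum_re.abs
  calc |∑' x, (inner (𝕜 := ℂ) (W φ x) (W χ x)).re|
      ≤ ∑' x, |(inner (𝕜 := ℂ) (W φ x) (W χ x)).re| := by
        have := norm_tsum_le_tsum_norm
          (f := fun x => (inner (𝕜 := ℂ) (W φ x) (W χ x)).re)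
          (by simpa only [Real.norm_eq_abs] using habs_sum)
        simpa only [Real.norm_eq_abs] using this
    _ ≤ ∑' x, B x := Summable.tsum_le_tsum habs habs_sum hBsum
    _ ≤ m * ∑' x, G x ^ 2 := hBle
    _ = m * ‖W φ‖ ^ 2 := by rw [hGsum]

end main2
section gron

lemma gronwall_le {F D : ℝ → ℝ} {K : ℝ} (hF : ∀ r, HasDerivAt F (D r) r)
    (hFpos : ∀ r, 0 ≤ F r) (hb : ∀ r, |D r| ≤ K * F r) {s t : ℝ} (hst : s ≤ t) :
    F t ≤ F s * Real.exp (K * (t - s)) := by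
  have cont : ContinuousOn F (Set.Icc s t) := fun r _ =>
    ((hF r).continuousAt).continuousWithinAt
  have key := norm_le_gronwallBound_of_norm_deriv_right_le (f := F) (f' := D)
    (δ := F s) (K := K) (ε := 0) (a := s) (b := t) cont
    (fun r _ => (hF r).hasDerivWithinAt)
    (by rw [Real.norm_eq_abs, abs_of_nonneg (hFpos s)])
    (fun r _ => by
      rw [Real.norm_eq_abs, Real.norm_eq_abs, abs_of_nonneg (hFpos r), add_zero]
      exact hb r)
    t (Set.right_mem_Icc.mpr hst)
  rw [gronwallBound_ε0, Real.norm_eq_abs, abs_of_nonneg (hFpos t)] at key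
  exact key

lemma gronwall_abs {F D : ℝ → ℝ} {K : ℝ} (hF : ∀ r, HasDerivAt F (D r) r)
    (hFpos : ∀ r, 0 ≤ F r) (hb : ∀ r, |D r| ≤ K * F r) (s t : ℝ) :
    F t ≤ F s * Real.exp (K * |t - s|) := by
  rcases le_total s t with hst | hts
  · rw [abs_of_nonneg (by linarith)]
    exact gronwall_le hF hFpos hb hst
  · set G : ℝ → ℝ := fun r => F (t + s - r) with hG
    have hGd : ∀ r, HasDerivAt G (D (t + s - r) * (-1)) r := fun r => by
      have h1 : HasDerivAt (fun r : ℝ => t + s - r) (-1) r := by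
        simpa using ((hasDerivAt_id r).const_sub (t + s))
      exact (hF (t + s - r)).comp r h1
    have hGpos : ∀ r, 0 ≤ G r := fun r => hFpos _
    have hGb : ∀ r, |D (t + s - r) * (-1)| ≤ K * G r := fun r => by
      rw [abs_mul, abs_neg, abs_one, mul_one]
      exact hb _
    have := gronwall_le hGd hGpos hGb hts
    have hGt : G t = F s := by rw [hG]; norm_num
    have hGs : G s = F t := by rw [hG]; norm_num
    rw [hGt, hGs] at this
    rw [abs_of_nonpos (by linarith)]
    convert this using 3
    ring

end gron

section derivsq
variable {E : Type*} [NormedAddCommGroup E] [InnerProductSpace ℂ E]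

lemma hasDerivAt_norm_sq {f : ℝ → E} {f' : E} {r : ℝ} (hf : HasDerivAt f f' r) :
    HasDerivAt (fun u => ‖f u‖ ^ 2) (2 * (inner (𝕜 := ℂ) (f r) f').re) r := by
  have h1 := HasDerivAt.inner (𝕜 := ℂ) hf hf
  have h2 := Complex.reCLM.hasFDerivAt.comp_hasDerivAt r h1
  have heq : (fun u => Complex.reCLM (inner (𝕜 := ℂ) (f u) (f u))) =
      fun u => ‖f u‖ ^ 2 := by
    funext u
    exact inner_self_eq_norm_sq (𝕜 := ℂ) (f u)
  rw [show (⇑Complex.reCLM ∘ fun t => inner (𝕜 := ℂ) (f t) (f t)) =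
      fun u => Complex.reCLM (inner (𝕜 := ℂ) (f u) (f u)) from rfl, heq] at h2
  refine h2.congr_deriv ?_
  have : inner (𝕜 := ℂ) f' (f r) = starRingEnd ℂ (inner (𝕜 := ℂ) (f r) f') :=
    (inner_conj_symm _ _).symm
  simp only [map_add, this]
  rw [Complex.reCLM_apply, Complex.reCLM_apply]
  rw [Complex.conj_re]
  ring
end derivsq
set_option maxHeartbeats 1000000 in
/-- a priori bound on the evolution. Let `h : ℤᵈ → ℂ` with `h(0) = 0` and
`m = Σ_ζ (1+|ζ|)|h(ζ)| < ∞`, and let `H₀` be convolution by `h` on `ℓ²(ℤᵈ)`.  Let `v` be a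
bounded time-dependent real potential and `V(t)` the corresponding multiplication operators.
If `U(t)` solves `U(s) = 1`, `(d/dt)U(t)ψ = −i(H₀ + V(t))U(t)ψ`, then for every `t` and every
`ψ` with `Σ_x (1+|x|)²|ψ(x)|² < ∞` one has
`Σ_x (1+|x|)²|(U(t)ψ)(x)|² ≤ e^{2m|t−s|} Σ_x (1+|x|)²|ψ(x)|²`. -/
theorem stmt_5 (d : ℕ) (hd : 1 ≤ d) (h : (Fin d → ℤ) → ℂ) (h0 : h 0 = 0)
    (m : ℝ) (hm : HasSum (fun ζ : Fin d → ℤ => (1 + latticeNorm ζ) * ‖h ζ‖) m)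
    (H₀ : lp (fun _ : Fin d → ℤ => ℂ) 2 →L[ℂ] lp (fun _ : Fin d → ℤ => ℂ) 2)
    (hH₀ : ∀ (ψ : lp (fun _ : Fin d → ℤ => ℂ) 2) (x : Fin d → ℤ),
      H₀ ψ x = ∑' y : Fin d → ℤ, h (x - y) * ψ y)
    (v : ℝ → (Fin d → ℤ) → ℝ) (C : ℝ) (hv : ∀ t x, |v t x| ≤ C)
    (V : ℝ → lp (fun _ : Fin d → ℤ => ℂ) 2 →L[ℂ] lp (fun _ : Fin d → ℤ => ℂ) 2)
    (hV : ∀ (t : ℝ) (ψ : lp (fun _ : Fin d → ℤ => ℂ) 2) (x : Fin d → ℤ),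
      V t ψ x = (v t x : ℂ) * ψ x)
    (s : ℝ)
    (U : ℝ → lp (fun _ : Fin d → ℤ => ℂ) 2 →L[ℂ] lp (fun _ : Fin d → ℤ => ℂ) 2)
    (hUs : U s = 1)
    (hU : ∀ (ψ : lp (fun _ : Fin d → ℤ => ℂ) 2) (t : ℝ),
      HasDerivAt (fun r : ℝ => U r ψ) ((-Complex.I) • ((H₀ + V t) (U t ψ))) t) :
    ∀ (t : ℝ) (ψ : lp (fun _ : Fin d → ℤ => ℂ) 2),
      Summable (fun x : Fin d → ℤ => (1 + latticeNorm x) ^ 2 * ‖ψ x‖ ^ 2) →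
      ∑' x : Fin d → ℤ, (1 + latticeNorm x) ^ 2 * ‖U t ψ x‖ ^ 2 ≤
        Real.exp (2 * m * |t - s|) *
          ∑' x : Fin d → ℤ, (1 + latticeNorm x) ^ 2 * ‖ψ x‖ ^ 2 := by
  intro t ψ hψ
  classical
  set M := ∑' x : Fin d → ℤ, (1 + latticeNorm x) ^ 2 * ‖ψ x‖ ^ 2 with hM
  have hM0 : 0 ≤ M := tsum_nonneg fun x => by positivity
  -- the truncated weight bound, for every n : ℕ
  have keybound : ∀ n : ℕ,
      ∑' x : Fin d → ℤ, (min (1 + latticeNorm x) ((n : ℝ) + 1)) ^ 2 * ‖U t ψ x‖ ^ 2 ≤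
        M * Real.exp (2 * m * |t - s|) := by
    intro n
    set R : ℝ := (n : ℝ) + 1 with hRdef
    have hR : 0 ≤ R := by positivity
    set w : (Fin d → ℤ) → ℝ := fun x => min (1 + latticeNorm x) R with hwdef
    have hw0 : ∀ x, 0 ≤ w x := fun x =>
      le_min (by linarith [latticeNorm_nonneg x]) hR
    have hw : ∀ x, |w x| ≤ R := fun x => by
      rw [abs_of_nonneg (hw0 x)]; exact min_le_right _ _
    have hwg : ∀ x y, w x ≤ (1 + latticeNorm (x - y)) * w y := by
      intro x y
      have hρ : 0 ≤ latticeNorm (x - y) := latticeNorm_nonneg _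
      have htri := latticeNorm_triangle x y
      have h1 : 1 + latticeNorm x ≤ (1 + latticeNorm (x - y)) * (1 + latticeNorm y) := by
        nlinarith [latticeNorm_nonneg y]
      have h2 : R ≤ (1 + latticeNorm (x - y)) * R := by nlinarith [mul_nonneg hρ hR]
      have e : (1 + latticeNorm (x - y)) * w y =
          min ((1 + latticeNorm (x - y)) * (1 + latticeNorm y))
            ((1 + latticeNorm (x - y)) * R) := by
        show (1 + latticeNorm (x - y)) * min (1 + latticeNorm y) R = _
        rw [mul_min_of_nonneg _ _ (by linarith : (0:ℝ) ≤ 1 + latticeNorm (x - y))]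
      rw [e]
      exact le_min ((min_le_left _ _).trans h1) ((min_le_right _ _).trans h2)
    set W := mulOp w R hR hw with hWdef
    have hWnorm : ∀ (φ : lp (fun _ : Fin d → ℤ => ℂ) 2) (x : Fin d → ℤ),
        ‖W φ x‖ ^ 2 = w x ^ 2 * ‖φ x‖ ^ 2 := by
      intro φ x
      rw [hWdef, mulOp_apply, norm_real_mul, abs_of_nonneg (hw0 x), mul_pow]
    set F : ℝ → ℝ := fun r => ‖W (U r ψ)‖ ^ 2 with hF
    set D : ℝ → ℝ := fun r => 2 * (inner (𝕜 := ℂ) (W (U r ψ))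
      (W ((-Complex.I) • ((H₀ + V r) (U r ψ))))).re with hD
    have hFd : ∀ r, HasDerivAt F (D r) r := by
      intro r
      have h1 := ((W.restrictScalars ℝ).hasFDerivAt (x := U r ψ)).comp_hasDerivAt
        r (hU ψ r)
      exact hasDerivAt_norm_sq (f := fun u => W (U u ψ)) h1
    have hFpos : ∀ r, 0 ≤ F r := fun r => sq_nonneg _
    have hDb : ∀ r, |D r| ≤ (2 * m) * F r := by
      intro r
      have hχ : ∀ x, (((-Complex.I) • ((H₀ + V r) (U r ψ))) :
          lp (fun _ : Fin d → ℤ => ℂ) 2) x =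
          -Complex.I * ((H₀ (U r ψ)) x + (v r x : ℂ) * (U r ψ) x) := by
        intro x
        have e1 : (((-Complex.I) • ((H₀ + V r) (U r ψ))) :
            lp (fun _ : Fin d → ℤ => ℂ) 2) x =
            -Complex.I * (((H₀ + V r) (U r ψ)) x) := by
          rw [lp.coeFn_smul, Pi.smul_apply, smul_eq_mul]
        rw [e1, ContinuousLinearMap.add_apply, lp.coeFn_add, Pi.add_apply,
          hV r (U r ψ) x]
      have hib := inner_bound h hm H₀ hH₀ (v r) w R hR hw hw0 hwg (U r ψ)
        ((-Complex.I) • ((H₀ + V r) (U r ψ))) hχ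
      rw [hD]
      calc |2 * (inner (𝕜 := ℂ) (W (U r ψ))
            (W ((-Complex.I) • ((H₀ + V r) (U r ψ))))).re|
          = 2 * |(inner (𝕜 := ℂ) (W (U r ψ))
            (W ((-Complex.I) • ((H₀ + V r) (U r ψ))))).re| := by
            rw [abs_mul, abs_two]
        _ ≤ 2 * (m * ‖W (U r ψ)‖ ^ 2) := by linarith
        _ = (2 * m) * F r := by rw [hF]; ring
    have hgr := gronwall_abs hFd hFpos hDb s t
    have hFs : F s ≤ M := by
      show ‖W (U s ψ)‖ ^ 2 ≤ M
      have h1 : U s ψ = ψ := by rw [hUs]; rfl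
      rw [h1, lp_norm_sq_eq]
      apply Summable.tsum_le_tsum _ ((lp_summable_norm_sq (W ψ))) hψ
      intro x
      rw [hWnorm ψ x]
      apply mul_le_mul_of_nonneg_right _ (sq_nonneg _)
      have hwle : w x ≤ 1 + latticeNorm x := min_le_left _ _
      exact pow_le_pow_left₀ (hw0 x) hwle 2
    have hFt : F t = ∑' x : Fin d → ℤ,
        (min (1 + latticeNorm x) ((n : ℝ) + 1)) ^ 2 * ‖U t ψ x‖ ^ 2 := by
      show ‖W (U t ψ)‖ ^ 2 = _
      rw [lp_norm_sq_eq]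
      exact tsum_congr fun x => by rw [hWnorm (U t ψ) x]
    rw [← hFt]
    calc F t ≤ F s * Real.exp (2 * m * |t - s|) := hgr
      _ ≤ M * Real.exp (2 * m * |t - s|) :=
          mul_le_mul_of_nonneg_right hFs (Real.exp_pos _).le
  -- pass to the limit in the truncation
  have hTsummable : ∀ n : ℕ, Summable (fun x : Fin d → ℤ =>
      (min (1 + latticeNorm x) ((n : ℝ) + 1)) ^ 2 * ‖U t ψ x‖ ^ 2) := by
    intro n
    set R : ℝ := (n : ℝ) + 1 with hRdef
    have hR : 0 ≤ R := by positivity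
    have hw0 : ∀ x : Fin d → ℤ, 0 ≤ min (1 + latticeNorm x) R := fun x =>
      le_min (by linarith [latticeNorm_nonneg x]) hR
    refine Summable.of_nonneg_of_le (fun x => by positivity) (fun x => ?_)
      ((lp_summable_norm_sq (U t ψ)).mul_left (R ^ 2))
    apply mul_le_mul_of_nonneg_right _ (sq_nonneg _)
    exact pow_le_pow_left₀ (hw0 x) (min_le_right _ _) 2
  have claim : ∀ S : Finset (Fin d → ℤ),
      ∑ x ∈ S, (1 + latticeNorm x) ^ 2 * ‖U t ψ x‖ ^ 2 ≤
        M * Real.exp (2 * m * |t - s|) := by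
    intro S
    have hbd : ∀ x ∈ S, 1 + latticeNorm x ≤ ∑ x' ∈ S, (1 + latticeNorm x') := by
      intro x hx
      exact Finset.single_le_sum (f := fun x' => 1 + latticeNorm x')
        (fun x' _ => by
          show (0:ℝ) ≤ 1 + latticeNorm x'
          linarith [latticeNorm_nonneg x']) hx
    obtain ⟨n, hn⟩ := exists_nat_ge (∑ x' ∈ S, (1 + latticeNorm x'))
    have heq : ∀ x ∈ S, (1 + latticeNorm x) ^ 2 * ‖U t ψ x‖ ^ 2 =
        (min (1 + latticeNorm x) ((n : ℝ) + 1)) ^ 2 * ‖U t ψ x‖ ^ 2 := by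
      intro x hx
      rw [min_eq_left]
      calc 1 + latticeNorm x ≤ ∑ x' ∈ S, (1 + latticeNorm x') := hbd x hx
        _ ≤ (n : ℝ) := hn
        _ ≤ (n : ℝ) + 1 := by linarith
    rw [Finset.sum_congr rfl heq]
    calc ∑ x ∈ S, (min (1 + latticeNorm x) ((n : ℝ) + 1)) ^ 2 * ‖U t ψ x‖ ^ 2
        ≤ ∑' x : Fin d → ℤ,
          (min (1 + latticeNorm x) ((n : ℝ) + 1)) ^ 2 * ‖U t ψ x‖ ^ 2 :=
          Summable.sum_le_tsum S (fun x _ => by positivity) (hTsummable n)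
      _ ≤ M * Real.exp (2 * m * |t - s|) := keybound n
  have hsummable : Summable (fun x : Fin d → ℤ =>
      (1 + latticeNorm x) ^ 2 * ‖U t ψ x‖ ^ 2) :=
    summable_of_sum_le (fun x => by positivity) claim
  have := Summable.tsum_le_of_sum_le hsummable claim
  linarith [this]
end

section
/- Let (S, μ) be a probability space equipped with μ-measure-preserving measurable maps σ_x : S → S for x ∈ ℤᵈ satisfying σ_0 = id and σ_x ∘ σ_y = σ_{x+y}. Let h : ℤᵈ → ℂ satisfy h(0) = 0 and Σ_{ξ∈ℤᵈ} |h(ξ)| < ∞, and let F : S × ℤᵈ × ℤᵈ → ℂ be measurable in its first argument with ‖F‖_{W¹} := sup_{x∈ℤᵈ} Σ_{ζ∈ℤᵈ} ∫_S |F(s, x+ζ, ζ)| dμ(s) < ∞. Define (𝒦F)(s, x, y) := Σ_{ξ≠0} h(ξ) ( F(s, x−ξ, y) − F(s, x, y+ξ) ), and for k ∈ ℝᵈ and φ : S × ℤᵈ → ℂ define (K̂_k φ)(s, x) := Σ_{ξ≠0} h(ξ) ( φ(s, x−ξ) − e^{i k·ξ} φ(σ_ξ s, x−ξ) ). Then for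 every k ∈ ℝᵈ and every x ∈ ℤᵈ, for μ-almost every s ∈ S one has (𝒦F)^^_k(s, x) = (K̂_k F̂_k)(s, x), where F̂_k(s, x) := Σ_{ζ∈ℤᵈ} e^{i k·ζ} F(σ_ζ s, x−ζ, −ζ) and (𝒦F)^^_k is the Fourier transform of 𝒦F at k. -/
open MeasureTheory ENNReal

/-- The augmented-space norm `‖F‖_{W¹} = sup_x Σ_ζ ∫ |F(s, x+ζ, ζ)| dμ(s)`
(as an extended nonnegative real). -/
noncomputable def W1norm {S : Type*} [MeasurableSpace S] (μ : Measure S) {d : ℕ}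
    (F : S → (Fin d → ℤ) → (Fin d → ℤ) → ℂ) : ℝ≥0∞ :=
  ⨆ x : Fin d → ℤ, ∑' ζ : Fin d → ℤ, ∫⁻ s, (‖F s (x + ζ) ζ‖₊ : ℝ≥0∞) ∂μ

/-- The Fourier transform `F̂_k(s,x) = Σ_ζ e^{ik·ζ} F(σ_ζ s, x−ζ, −ζ)`. -/
noncomputable def fourierW {S : Type*} {d : ℕ} (σ : (Fin d → ℤ) → S → S)
    (F : S → (Fin d → ℤ) → (Fin d → ℤ) → ℂ) (k : Fin d → ℝ) (s : S) (x : Fin d → ℤ) : ℂ :=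
  ∑' ζ : Fin d → ℤ,
    Complex.exp (Complex.I * (∑ j, k j * (ζ j : ℝ) : ℝ)) * F (σ ζ s) (x - ζ) (-ζ)

noncomputable def Ek {d : ℕ} (k : Fin d → ℝ) (ζ : Fin d → ℤ) : ℂ :=
  Complex.exp (Complex.I * (∑ j, k j * (ζ j : ℝ) : ℝ))

lemma Ek_norm {d : ℕ} (k : Fin d → ℝ) (ζ : Fin d → ℤ) : ‖Ek k ζ‖ = 1 := by
  unfold Ek
  simp [Complex.norm_exp]

lemma Ek_add {d : ℕ} (k : Fin d → ℝ) (η ξ : Fin d → ℤ) :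
    Ek k (η + ξ) = Ek k ξ * Ek k η := by
  unfold Ek
  rw [← Complex.exp_add]
  congr 1
  have h1 : (∑ j, k j * (((η + ξ) j : ℤ) : ℝ))
      = (∑ j, k j * ((ξ j : ℤ) : ℝ)) + ∑ j, k j * ((η j : ℤ) : ℝ) := by
    rw [← Finset.sum_add_distrib]
    refine Finset.sum_congr rfl fun j _ => ?_
    simp only [Pi.add_apply]
    push_cast
    ring
  rw [h1, Complex.ofReal_add]
  ring

/-- The Fourier transform of the hopping operator
`(𝒦F)(s,x,y) = Σ_{ξ≠0} h(ξ)(F(s,x−ξ,y) − F(s,x,y+ξ))` satisfies, for every `k` and `x`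
and almost every `s`,
`(𝒦F)^_k(s,x) = Σ_{ξ≠0} h(ξ)(F̂_k(s,x−ξ) − e^{ik·ξ} F̂_k(σ_ξ s, x−ξ))`. -/
theorem stmt_16 {S : Type*} [MeasurableSpace S] (μ : Measure S) [IsProbabilityMeasure μ]
    (d : ℕ) (hd : 1 ≤ d)
    (σ : (Fin d → ℤ) → S → S)
    (hσ : ∀ x, MeasurePreserving (σ x) μ μ)
    (hσ0 : σ 0 = id)
    (hσadd : ∀ x y, σ x ∘ σ y = σ (x + y))
    (h : (Fin d → ℤ) → ℂ) (h0 : h 0 = 0)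
    (hsum : Summable fun ξ : Fin d → ℤ => ‖h ξ‖)
    (F : S → (Fin d → ℤ) → (Fin d → ℤ) → ℂ)
    (hFmeas : ∀ x y, Measurable fun s => F s x y)
    (hF : W1norm μ F < ⊤) :
    ∀ (k : Fin d → ℝ) (x : Fin d → ℤ),
      ∀ᵐ s ∂μ,
        fourierW σ
            (fun s x y =>
              ∑' ξ : {ξ : Fin d → ℤ // ξ ≠ 0}, h ξ.1 * (F s (x - ξ.1) y - F s x (y + ξ.1)))
            k s x =
          ∑' ξ : {ξ : Fin d → ℤ // ξ ≠ 0},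
            h ξ.1 *
              (fourierW σ F k s (x - ξ.1) -
                Complex.exp (Complex.I * (∑ j, k j * (ξ.1 j : ℝ) : ℝ)) *
                  fourierW σ F k (σ ξ.1 s) (x - ξ.1)) := by
  intro k x
  classical
  -- abbreviations
  set T := {ξ : Fin d → ℤ // ξ ≠ 0} with hT
  set I2 : (Fin d → ℤ) → (Fin d → ℤ) → ℝ≥0∞ :=
    fun a b => ∫⁻ s, (‖F s a b‖₊ : ℝ≥0∞) ∂μ with hI2
  have hshift : ∀ (ζ a b : Fin d → ℤ),
      ∫⁻ s, (‖F (σ ζ s) a b‖₊ : ℝ≥0∞) ∂μ = I2 a b := fun ζ a b =>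
    (hσ ζ).lintegral_comp ((hFmeas a b).nnnorm.coe_nnreal_ennreal)
  have hW1 : ∀ y : Fin d → ℤ, (∑' ζ : Fin d → ℤ, I2 (y + ζ) ζ) ≤ W1norm μ F := fun y =>
    le_iSup (fun x : Fin d → ℤ => ∑' ζ : Fin d → ℤ, I2 (x + ζ) ζ) y
  -- the dominating family
  set u : ((Fin d → ℤ) × T) → S → ℝ≥0∞ := fun p s =>
    (‖h p.2.1‖₊ : ℝ≥0∞) * ((‖F (σ p.1 s) (x - p.1 - p.2.1) (-p.1)‖₊ : ℝ≥0∞)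
      + (‖F (σ p.1 s) (x - p.1) (-p.1 + p.2.1)‖₊ : ℝ≥0∞)) with hu
  have humeas : ∀ p, Measurable (u p) := by
    intro p
    apply Measurable.const_mul
    exact (((hFmeas _ _).comp (hσ p.1).measurable).nnnorm.coe_nnreal_ennreal).add
      (((hFmeas _ _).comp (hσ p.1).measurable).nnnorm.coe_nnreal_ennreal)
  have hInt : ∀ p : (Fin d → ℤ) × T, ∫⁻ s, u p s ∂μ
      = (‖h p.2.1‖₊ : ℝ≥0∞) * (I2 (x - p.1 - p.2.1) (-p.1) + I2 (x - p.1) (-p.1 + p.2.1)) := by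
    intro p
    have m1 : Measurable fun s0 : S => (‖F (σ p.1 s0) (x - p.1 - p.2.1) (-p.1)‖₊ : ℝ≥0∞) :=
      ((hFmeas _ _).comp (hσ p.1).measurable).nnnorm.coe_nnreal_ennreal
    have m2 : Measurable fun s0 : S => (‖F (σ p.1 s0) (x - p.1) (-p.1 + p.2.1)‖₊ : ℝ≥0∞) :=
      ((hFmeas _ _).comp (hσ p.1).measurable).nnnorm.coe_nnreal_ennreal
    rw [hu]
    simp only
    rw [lintegral_const_mul _ (show Measurable fun s0 : S =>
      (‖F (σ p.1 s0) (x - p.1 - p.2.1) (-p.1)‖₊ : ℝ≥0∞) + ‖F (σ p.1 s0) (x - p.1) (-p.1 + p.2.1)‖₊ from m1.add m2), lintegral_add_left m1, hshift, hshift]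
  -- reindexing identities
  have hre1 : ∀ ξ : Fin d → ℤ,
      (∑' ζ : Fin d → ℤ, I2 (x - ζ - ξ) (-ζ)) = ∑' ζ : Fin d → ℤ, I2 ((x - ξ) + ζ) ζ := by
    intro ξ
    rw [← (Equiv.neg (Fin d → ℤ)).tsum_eq (fun ζ => I2 ((x - ξ) + ζ) ζ)]
    refine tsum_congr fun ζ => ?_
    simp only [Equiv.neg_apply]
    congr 1
    abel
  have hre2 : ∀ ξ : Fin d → ℤ,
      (∑' ζ : Fin d → ℤ, I2 (x - ζ) (-ζ + ξ)) = ∑' ζ : Fin d → ℤ, I2 ((x - ξ) + ζ) ζ := by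
    intro ξ
    rw [← (Equiv.subLeft ξ).tsum_eq (fun ζ => I2 (x - ζ) (-ζ + ξ))]
    refine tsum_congr fun η => ?_
    simp only [Equiv.subLeft_apply]
    congr 1
    · abel
    · abel
  have hhsum : (∑' ξ : Fin d → ℤ, (‖h ξ‖₊ : ℝ≥0∞)) ≠ ⊤ := by
    rw [ENNReal.tsum_coe_ne_top_iff_summable]
    exact NNReal.summable_coe.mp (by simpa using hsum)
  -- finiteness of the double integral
  have key : ∫⁻ s, ∑' p : (Fin d → ℤ) × T, u p s ∂μ < ⊤ := by
    rw [lintegral_tsum (fun p => (humeas p).aemeasurable)]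
    calc ∑' p : (Fin d → ℤ) × T, ∫⁻ s, u p s ∂μ
        = ∑' (ξ : T) (ζ : Fin d → ℤ), (‖h ξ.1‖₊ : ℝ≥0∞) *
            (I2 (x - ζ - ξ.1) (-ζ) + I2 (x - ζ) (-ζ + ξ.1)) := by
          simp only [hInt]
          rw [ENNReal.tsum_prod']
          exact ENNReal.tsum_comm
      _ ≤ ∑' (ξ : T), (‖h ξ.1‖₊ : ℝ≥0∞) * (2 * W1norm μ F) := by
          refine ENNReal.tsum_le_tsum fun ξ => ?_
          rw [ENNReal.tsum_mul_left]
          refine mul_le_mul_right ?_ _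
          rw [ENNReal.tsum_add, hre1 ξ.1, hre2 ξ.1, two_mul]
          exact add_le_add (hW1 _) (hW1 _)
      _ = (∑' ξ : T, (‖h ξ.1‖₊ : ℝ≥0∞)) * (2 * W1norm μ F) := ENNReal.tsum_mul_right
      _ < ⊤ := by
          refine ENNReal.mul_lt_top ?_ ?_
          · exact lt_of_le_of_lt
              (ENNReal.tsum_comp_le_tsum_of_injective Subtype.coe_injective
                (fun ξ => (‖h ξ‖₊ : ℝ≥0∞)))
              (lt_of_le_of_ne le_top hhsum)
          · exact ENNReal.mul_lt_top (by norm_num) hF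
  have hae : ∀ᵐ s ∂μ, (∑' p : (Fin d → ℤ) × T, u p s) < ⊤ :=
    ae_lt_top (Measurable.ennreal_tsum humeas) key.ne
  filter_upwards [hae] with s hs
  -- real summability of the dominating family
  have hs' : Summable (fun p : (Fin d → ℤ) × T =>
      ‖h p.2.1‖ * (‖F (σ p.1 s) (x - p.1 - p.2.1) (-p.1)‖
        + ‖F (σ p.1 s) (x - p.1) (-p.1 + p.2.1)‖)) := by
    have h1 : Summable (fun p : (Fin d → ℤ) × T =>
        (‖h p.2.1‖₊ * (‖F (σ p.1 s) (x - p.1 - p.2.1) (-p.1)‖₊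
          + ‖F (σ p.1 s) (x - p.1) (-p.1 + p.2.1)‖₊) : NNReal)) := by
      rw [← ENNReal.tsum_coe_ne_top_iff_summable]
      push_cast
      exact hs.ne
    have h2 := NNReal.summable_coe.mpr h1
    simpa using h2
  -- summability of the complex double family
  have hgsum : Summable (fun p : (Fin d → ℤ) × T =>
      Ek k p.1 * (h p.2.1 * (F (σ p.1 s) (x - p.1 - p.2.1) (-p.1)
        - F (σ p.1 s) (x - p.1) (-p.1 + p.2.1)))) := by
    refine Summable.of_norm (Summable.of_nonneg_of_le
      (fun p => norm_nonneg _) (fun p => ?_) hs')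
    rw [norm_mul, Ek_norm, one_mul, norm_mul]
    exact mul_le_mul_of_nonneg_left (norm_sub_le _ _) (norm_nonneg _)
  -- per-ξ summabilities
  have hA : ∀ ξ : T, h ξ.1 ≠ 0 →
      Summable fun ζ : Fin d → ℤ => Ek k ζ * F (σ ζ s) (x - ζ - ξ.1) (-ζ) := by
    intro ξ hξ
    have hfac : Summable fun ζ : Fin d → ℤ =>
        ‖h ξ.1‖ * (‖F (σ ζ s) (x - ζ - ξ.1) (-ζ)‖ + ‖F (σ ζ s) (x - ζ) (-ζ + ξ.1)‖) :=
      hs'.comp_injective (i := fun ζ : Fin d → ℤ => (ζ, ξ))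
        (fun a b hab => congrArg Prod.fst hab)
    have habs : Summable fun ζ : Fin d → ℤ =>
        ‖F (σ ζ s) (x - ζ - ξ.1) (-ζ)‖ + ‖F (σ ζ s) (x - ζ) (-ζ + ξ.1)‖ :=
      (summable_mul_left_iff (norm_ne_zero_iff.mpr hξ)).mp hfac
    refine Summable.of_norm (Summable.of_nonneg_of_le
      (fun ζ => norm_nonneg _) (fun ζ => ?_) habs)
    rw [norm_mul, Ek_norm, one_mul]
    exact le_add_of_nonneg_right (norm_nonneg _)
  have hB : ∀ ξ : T, h ξ.1 ≠ 0 →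
      Summable fun ζ : Fin d → ℤ => Ek k ζ * F (σ ζ s) (x - ζ) (-ζ + ξ.1) := by
    intro ξ hξ
    have hfac : Summable fun ζ : Fin d → ℤ =>
        ‖h ξ.1‖ * (‖F (σ ζ s) (x - ζ - ξ.1) (-ζ)‖ + ‖F (σ ζ s) (x - ζ) (-ζ + ξ.1)‖) :=
      hs'.comp_injective (i := fun ζ : Fin d → ℤ => (ζ, ξ))
        (fun a b hab => congrArg Prod.fst hab)
    have habs : Summable fun ζ : Fin d → ℤ =>
        ‖F (σ ζ s) (x - ζ - ξ.1) (-ζ)‖ + ‖F (σ ζ s) (x - ζ) (-ζ + ξ.1)‖ :=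
      (summable_mul_left_iff (norm_ne_zero_iff.mpr hξ)).mp hfac
    refine Summable.of_norm (Summable.of_nonneg_of_le
      (fun ζ => norm_nonneg _) (fun ζ => ?_) habs)
    rw [norm_mul, Ek_norm, one_mul]
    exact le_add_of_nonneg_left (norm_nonneg _)
  -- main chain
  have hL : fourierW σ
        (fun s x y => ∑' ξ : T, h ξ.1 * (F s (x - ξ.1) y - F s x (y + ξ.1))) k s x
      = ∑' (ζ : Fin d → ℤ) (ξ : T),
          Ek k ζ * (h ξ.1 * (F (σ ζ s) (x - ζ - ξ.1) (-ζ) - F (σ ζ s) (x - ζ) (-ζ + ξ.1))) := by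
    rw [show fourierW σ
        (fun s x y => ∑' ξ : T, h ξ.1 * (F s (x - ξ.1) y - F s x (y + ξ.1))) k s x
      = ∑' ζ : Fin d → ℤ, Ek k ζ * ∑' ξ : T, h ξ.1 *
          (F (σ ζ s) (x - ζ - ξ.1) (-ζ) - F (σ ζ s) (x - ζ) (-ζ + ξ.1)) from rfl]
    exact tsum_congr fun ζ => tsum_mul_left.symm
  have hswap : (∑' (ζ : Fin d → ℤ) (ξ : T),
        Ek k ζ * (h ξ.1 * (F (σ ζ s) (x - ζ - ξ.1) (-ζ) - F (σ ζ s) (x - ζ) (-ζ + ξ.1))))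
      = ∑' (ξ : T) (ζ : Fin d → ℤ),
        Ek k ζ * (h ξ.1 * (F (σ ζ s) (x - ζ - ξ.1) (-ζ) - F (σ ζ s) (x - ζ) (-ζ + ξ.1))) :=
    (Summable.tsum_comm (f := fun (ζ : Fin d → ℤ) (ξ : T) =>
      Ek k ζ * (h ξ.1 * (F (σ ζ s) (x - ζ - ξ.1) (-ζ) - F (σ ζ s) (x - ζ) (-ζ + ξ.1))))
      hgsum).symm
  have hterm : ∀ ξ : T,
      (∑' ζ : Fin d → ℤ,
          Ek k ζ * (h ξ.1 * (F (σ ζ s) (x - ζ - ξ.1) (-ζ) - F (σ ζ s) (x - ζ) (-ζ + ξ.1))))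
        = h ξ.1 * (fourierW σ F k s (x - ξ.1)
            - Ek k ξ.1 * fourierW σ F k (σ ξ.1 s) (x - ξ.1)) := by
    intro ξ
    by_cases hξ : h ξ.1 = 0
    · simp [hξ]
    · have hA' := hA ξ hξ
      have hB' := hB ξ hξ
      have e1 : fourierW σ F k s (x - ξ.1)
          = ∑' ζ : Fin d → ℤ, Ek k ζ * F (σ ζ s) (x - ζ - ξ.1) (-ζ) := by
        rw [show fourierW σ F k s (x - ξ.1)
          = ∑' ζ : Fin d → ℤ, Ek k ζ * F (σ ζ s) (x - ξ.1 - ζ) (-ζ) from rfl]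
        exact tsum_congr fun ζ => by rw [sub_right_comm]
      have e2 : (∑' ζ : Fin d → ℤ, Ek k ζ * F (σ ζ s) (x - ζ) (-ζ + ξ.1))
          = Ek k ξ.1 * fourierW σ F k (σ ξ.1 s) (x - ξ.1) := by
        rw [show fourierW σ F k (σ ξ.1 s) (x - ξ.1)
          = ∑' η : Fin d → ℤ, Ek k η * F (σ η (σ ξ.1 s)) (x - ξ.1 - η) (-η) from rfl]
        rw [← tsum_mul_left]
        rw [← (Equiv.addRight ξ.1).tsum_eq
          (fun ζ : Fin d → ℤ => Ek k ζ * F (σ ζ s) (x - ζ) (-ζ + ξ.1))]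
        refine tsum_congr fun η => ?_
        simp only [Equiv.coe_addRight]
        have hσ' : σ (η + ξ.1) s = σ η (σ ξ.1 s) := by rw [← hσadd]; rfl
        have harg1 : x - (η + ξ.1) = x - ξ.1 - η := by abel
        have harg2 : -(η + ξ.1) + ξ.1 = -η := by abel
        rw [Ek_add, hσ', harg1, harg2, mul_assoc]
      calc (∑' ζ : Fin d → ℤ,
            Ek k ζ * (h ξ.1 * (F (σ ζ s) (x - ζ - ξ.1) (-ζ) - F (σ ζ s) (x - ζ) (-ζ + ξ.1))))
          = ∑' ζ : Fin d → ℤ,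
              (h ξ.1 * (Ek k ζ * F (σ ζ s) (x - ζ - ξ.1) (-ζ))
                - h ξ.1 * (Ek k ζ * F (σ ζ s) (x - ζ) (-ζ + ξ.1))) :=
            tsum_congr fun ζ => by ring
        _ = (∑' ζ : Fin d → ℤ, h ξ.1 * (Ek k ζ * F (σ ζ s) (x - ζ - ξ.1) (-ζ)))
              - ∑' ζ : Fin d → ℤ, h ξ.1 * (Ek k ζ * F (σ ζ s) (x - ζ) (-ζ + ξ.1)) :=
            Summable.tsum_sub (hA'.mul_left _) (hB'.mul_left _)
        _ = h ξ.1 * (∑' ζ : Fin d → ℤ, Ek k ζ * F (σ ζ s) (x - ζ - ξ.1) (-ζ))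
              - h ξ.1 * ∑' ζ : Fin d → ℤ, Ek k ζ * F (σ ζ s) (x - ζ) (-ζ + ξ.1) := by
            rw [tsum_mul_left, tsum_mul_left]
        _ = h ξ.1 * (fourierW σ F k s (x - ξ.1)
              - Ek k ξ.1 * fourierW σ F k (σ ξ.1 s) (x - ξ.1)) := by
            rw [e1, e2]; ring
  show fourierW σ
        (fun s x y => ∑' ξ : T, h ξ.1 * (F s (x - ξ.1) y - F s x (y + ξ.1))) k s x
      = ∑' ξ : T, h ξ.1 * (fourierW σ F k s (x - ξ.1)
          - Ek k ξ.1 * fourierW σ F k (σ ξ.1 s) (x - ξ.1))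
  rw [hL, hswap]
  exact tsum_congr hterm
end

section
/- For every real number c ≥ 0, lim_{M→∞} (1/(2π)) ∫_{−M}^{M} e^{1 + i y} / ((1 + c) + i y) dy = e^{−c}. -/
open Filter Topology MeasureTheory Set Complex FourierTransform Real

namespace Stmt17

lemma integrableOn_mul_exp {b : ℂ} (hb : 0 < b.re) :
    IntegrableOn (fun x : ℝ => (x : ℂ) * Complex.exp (-(b * x))) (Ioi 0) := by
  have h : IntegrableOn (fun x : ℝ => x * Real.exp (-(b.re * x))) (Ioi 0) := by
    have h0 := integrableOn_rpow_mul_exp_neg_mul_rpow (s := 1) (p := 1)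
      (by norm_num) one_pos hb
    refine h0.congr_fun (fun x hx => ?_) measurableSet_Ioi
    simp only [Real.rpow_one, neg_mul]
  refine Integrable.mono' h ?_ ?_
  · exact (Complex.continuous_ofReal.mul
      (Complex.continuous_exp.comp (by continuity))).aestronglyMeasurable
  · filter_upwards [ae_restrict_mem measurableSet_Ioi] with x hx
    have : ((-(b * x)).re) = -(b.re * x) := by simp
    rw [norm_mul, Complex.norm_exp, this,
      Complex.norm_real, Real.norm_eq_abs, abs_of_pos (mem_Ioi.mp hx)]

lemma hasDerivAt_aux (b : ℂ) (hb : b ≠ 0) (x : ℝ) :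
    HasDerivAt (fun x : ℝ => -(((x : ℂ)) / b + 1 / b ^ 2) * Complex.exp (-(b * x)))
      ((x : ℂ) * Complex.exp (-(b * x))) x := by
  have H : HasDerivAt (fun z : ℂ => -(z / b + 1 / b ^ 2) * Complex.exp (-(b * z)))
      ((x : ℂ) * Complex.exp (-(b * x))) (x : ℂ) := by
    have h1 : HasDerivAt (fun z : ℂ => -(z / b + 1 / b ^ 2)) (-(1 / b)) (x : ℂ) :=
      (((hasDerivAt_id (x : ℂ)).div_const b).add_const (1 / b ^ 2)).neg
    have h2 : HasDerivAt (fun z : ℂ => Complex.exp (-(b * z)))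
        (-b * Complex.exp (-(b * (x : ℂ)))) (x : ℂ) := by
      have := (Complex.hasDerivAt_exp (-(b * (x : ℂ)))).comp (x : ℂ)
        (((hasDerivAt_id (x : ℂ)).const_mul b).neg)
      exact this.congr_deriv (by ring)
    have := h1.mul h2
    refine this.congr_deriv ?_
    field_simp
    ring
  exact H.comp_ofReal

lemma integral_mul_exp_Ioi {b : ℂ} (hb : 0 < b.re) :
    ∫ x : ℝ in Ioi 0, (x : ℂ) * Complex.exp (-(b * x)) = 1 / b ^ 2 := by
  have hb0 : b ≠ 0 := fun h => by simp [h] at hb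
  have htend : Tendsto (fun x : ℝ => -(((x : ℂ)) / b + 1 / b ^ 2) * Complex.exp (-(b * x)))
      atTop (𝓝 0) := by
    apply squeeze_zero_norm'
      (a := fun x : ℝ => (x * ‖1/b‖ + ‖1/b^2‖) * Real.exp (-(b.re * x)))
    · filter_upwards [eventually_ge_atTop (0 : ℝ)] with x hx
      rw [norm_mul, Complex.norm_exp]
      have : ((-(b * x)).re) = -(b.re * x) := by simp
      rw [this]
      apply mul_le_mul_of_nonneg_right ?_ (Real.exp_nonneg _)
      rw [norm_neg]
      refine (norm_add_le _ _).trans (le_of_eq ?_)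
      congr 1
      rw [div_eq_mul_one_div, norm_mul, Complex.norm_real, Real.norm_eq_abs,
        _root_.abs_of_nonneg hx]
    · have key : Tendsto (fun x : ℝ => (x * ‖1/b‖ + ‖1/b^2‖) * Real.exp (-(b.re * x)))
          atTop (𝓝 0) := by
        have comp : Tendsto (fun x : ℝ => b.re * x) atTop atTop :=
          Tendsto.const_mul_atTop hb tendsto_id
        have base : Tendsto (fun t : ℝ => (t / b.re * ‖1/b‖ + ‖1/b^2‖) * Real.exp (-t))
            atTop (𝓝 0) := by
          have h1 : Tendsto (fun t : ℝ => t * Real.exp (-t)) atTop (𝓝 0) := by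
            simpa using Real.tendsto_pow_mul_exp_neg_atTop_nhds_zero 1
          have h2 := Real.tendsto_exp_neg_atTop_nhds_zero
          have h3 : Tendsto (fun t : ℝ => (‖1/b‖ / b.re) * (t * Real.exp (-t))
              + ‖1/b^2‖ * Real.exp (-t)) atTop (𝓝 (‖1/b‖ / b.re * 0 + ‖1/b^2‖ * 0)) :=
            (h1.const_mul _).add (h2.const_mul _)
          simp only [mul_zero, add_zero] at h3
          exact h3.congr (fun t => by ring)
        have := base.comp comp
        refine this.congr (fun x => ?_)
        simp only [Function.comp]
        rw [mul_div_cancel_left₀ _ hb.ne']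
      exact key
  have := MeasureTheory.integral_Ioi_of_hasDerivAt_of_tendsto' (a := (0:ℝ))
    (m := (0 : ℂ)) (fun x _ => hasDerivAt_aux b hb0 x) (integrableOn_mul_exp hb) htend
  rw [this]
  simp

noncomputable def g (a : ℝ) : ℝ → ℂ :=
  (Ici (0:ℝ)).indicator (fun x => (x : ℂ) * Complex.exp (-((a : ℂ) * x)))

lemma integrable_g {a : ℝ} (ha : 0 < a) : Integrable (g a) := by
  rw [g, integrable_indicator_iff measurableSet_Ici]
  exact Iff.mpr integrableOn_Ici_iff_integrableOn_Ioi (integrableOn_mul_exp (by simpa using ha))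

lemma fourier_g {a : ℝ} (ha : 0 < a) (ξ : ℝ) :
    𝓕 (g a) ξ = 1 / ((a : ℂ) + (2 * π * ξ : ℝ) * I) ^ 2 := by
  set b : ℂ := (a : ℂ) + (2 * π * ξ : ℝ) * I with hbdef
  have hbre : 0 < b.re := by simp [hbdef, ha]
  rw [Real.fourier_real_eq_integral_exp_smul]
  calc (∫ v : ℝ, Complex.exp (↑(-2 * π * v * ξ) * I) • g a v)
      = ∫ v in Ici (0:ℝ),
          Complex.exp (↑(-2 * π * v * ξ) * I) * ((v : ℂ) * Complex.exp (-((a:ℂ) * v))) := by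
        rw [← integral_indicator measurableSet_Ici]
        congr 1
        ext v
        by_cases h : v ∈ Ici (0:ℝ) <;> simp [g, indicator, h, smul_eq_mul]
    _ = ∫ v in Ioi (0:ℝ), (v : ℂ) * Complex.exp (-(b * v)) := by
        rw [integral_Ici_eq_integral_Ioi]
        refine setIntegral_congr_fun measurableSet_Ioi (fun v _ => ?_)
        rw [mul_comm, mul_assoc, ← Complex.exp_add]
        congr 1
        push_cast [hbdef]
        ring
    _ = 1 / b ^ 2 := integral_mul_exp_Ioi hbre

lemma integrable_fourier_g {a : ℝ} (ha : 1 ≤ a) : Integrable (𝓕 (g a)) := by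
  have ha0 : (0:ℝ) < a := lt_of_lt_of_le one_pos ha
  have heq : 𝓕 (g a) = fun ξ : ℝ => 1 / ((a : ℂ) + (2 * π * ξ : ℝ) * I) ^ 2 :=
    funext (fourier_g ha0)
  rw [heq]
  refine Integrable.mono' (g := fun ξ : ℝ => (1 + ξ ^ 2)⁻¹)
    (by simpa using integrable_inv_one_add_sq) ?_ ?_
  · apply Continuous.aestronglyMeasurable
    apply Continuous.div continuous_const
    · continuity
    · intro ξ
      intro h
      have : ((a : ℂ) + (2 * π * ξ : ℝ) * I) = 0 := by
        exact pow_eq_zero_iff (by norm_num) |>.mp h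
      have := congrArg Complex.re this
      simp at this
      linarith
  · filter_upwards with ξ
    rw [norm_div, norm_one, norm_pow]
    have h1 : ‖(a : ℂ) + (2 * π * ξ : ℝ) * I‖ ^ 2 = a ^ 2 + (2 * π * ξ) ^ 2 := by
      rw [Complex.sq_norm, Complex.normSq_add_mul_I]
    rw [h1]
    have hx : (0:ℝ) < 1 + ξ ^ 2 := by positivity
    have hy : 1 + ξ ^ 2 ≤ a ^ 2 + (2 * π * ξ) ^ 2 := by
      have hπ : (0:ℝ) ≤ (4 * π ^ 2 - 1) * ξ ^ 2 :=
        mul_nonneg (by nlinarith [Real.pi_gt_three]) (sq_nonneg ξ)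
      nlinarith [sq_nonneg (a - 1)]
    calc 1 / (a ^ 2 + (2 * π * ξ) ^ 2) ≤ 1 / (1 + ξ ^ 2) :=
          one_div_le_one_div_of_le hx hy
      _ = (1 + ξ ^ 2)⁻¹ := one_div _


lemma key_integral {a : ℝ} (ha : 1 ≤ a) :
    ∫ y : ℝ, Complex.exp ((y : ℂ) * I) / ((a : ℂ) + (y : ℂ) * I) ^ 2
      = 2 * (π : ℂ) * Complex.exp (-(a : ℂ)) := by
  have ha0 : (0:ℝ) < a := lt_of_lt_of_le one_pos ha
  set K : ℝ → ℂ := fun y => Complex.exp ((y : ℂ) * I) / ((a : ℂ) + (y : ℂ) * I) ^ 2 with hK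
  have hcont : ContinuousAt (g a) 1 := by
    have hev : (fun x : ℝ => (x : ℂ) * Complex.exp (-((a : ℂ) * x))) =ᶠ[𝓝 (1:ℝ)] g a := by
      filter_upwards [isOpen_Ioi.mem_nhds (show (0:ℝ) < 1 by norm_num)] with x hx
      simp [g, indicator, le_of_lt (mem_Ioi.mp hx)]
    exact ContinuousAt.congr (by fun_prop) hev
  have hinv := (integrable_g ha0).fourierInv_fourier_eq (integrable_fourier_g ha) hcont
  rw [Real.fourierInv_eq'] at hinv
  simp only [RCLike.inner_apply, conj_trivial, mul_one, one_mul, smul_eq_mul] at hinv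
  have hg1 : g a 1 = Complex.exp (-(a:ℂ)) := by
    simp [g, indicator, Set.mem_Ici]
  rw [hg1] at hinv
  have hfun : (fun v : ℝ => Complex.exp (↑(2 * π * v) * I) * 𝓕 (g a) v)
      = fun v : ℝ => K (2 * π * v) := by
    funext v
    rw [fourier_g ha0 v, hK]
    rw [mul_one_div]
  rw [hfun, Measure.integral_comp_mul_left K (2 * π)] at hinv
  have habs : |(2 * π)⁻¹| = (2 * π)⁻¹ := abs_of_pos (by positivity)
  rw [habs, real_smul] at hinv
  have h2π : ((2 * π : ℝ) : ℂ) ≠ 0 := by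
    simp only [ne_eq, Complex.ofReal_eq_zero]
    positivity
  have hfin : ∫ y : ℝ, K y = ((2 * π : ℝ) : ℂ) * Complex.exp (-(a : ℂ)) := by
    rw [← hinv, Complex.ofReal_inv]
    rw [← mul_assoc, mul_inv_cancel₀ h2π, one_mul]
  rw [hfin]
  push_cast
  ring

lemma ne_zero_aux {a : ℝ} (ha : 1 ≤ a) (y : ℝ) : ((a : ℂ) + (y : ℂ) * I) ≠ 0 := by
  intro h
  have := congrArg Complex.re h
  simp at this
  linarith

lemma integrable_K {a : ℝ} (ha : 1 ≤ a) :
    Integrable (fun y : ℝ => Complex.exp ((y : ℂ) * I) / ((a : ℂ) + (y : ℂ) * I) ^ 2) := by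
  refine Integrable.mono' (g := fun y : ℝ => (1 + y ^ 2)⁻¹)
    (by simpa using integrable_inv_one_add_sq) ?_ ?_
  · apply Continuous.aestronglyMeasurable
    apply Continuous.div (by fun_prop) (by fun_prop)
    intro y
    exact pow_ne_zero 2 (ne_zero_aux ha y)
  · filter_upwards with y
    rw [norm_div, norm_pow]
    have he : ‖Complex.exp ((y : ℂ) * I)‖ = 1 := by
      rw [Complex.norm_exp]
      simp
    have h1 : ‖(a : ℂ) + (y : ℂ) * I‖ ^ 2 = a ^ 2 + y ^ 2 := by
      rw [Complex.sq_norm, Complex.normSq_add_mul_I]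
    rw [he, h1, one_div]
    apply inv_anti₀ (by positivity)
    nlinarith [sq_nonneg (a - 1)]

lemma ibp {a : ℝ} (ha : 1 ≤ a) (M : ℝ) :
    ∫ y in (-M)..M, ((a : ℂ) + (y : ℂ) * I)⁻¹ * Complex.exp ((y : ℂ) * I)
      = (((a : ℂ) + (M : ℂ) * I)⁻¹ * (-I * Complex.exp ((M : ℂ) * I))
          - ((a : ℂ) + ((-M : ℝ) : ℂ) * I)⁻¹ * (-I * Complex.exp (((-M : ℝ) : ℂ) * I)))
        + ∫ y in (-M)..M, Complex.exp ((y : ℂ) * I) / ((a : ℂ) + (y : ℂ) * I) ^ 2 := by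
  have hu : ∀ y : ℝ, HasDerivAt (fun y : ℝ => ((a : ℂ) + (y : ℂ) * I)⁻¹)
      (-I / ((a : ℂ) + (y : ℂ) * I) ^ 2) y := by
    intro y
    have hbase : HasDerivAt (fun z : ℂ => ((a : ℂ) + z * I)⁻¹)
        (-I / ((a : ℂ) + (y : ℂ) * I) ^ 2) (y : ℂ) := by
      have h1 : HasDerivAt (fun z : ℂ => (a : ℂ) + z * I) I (y : ℂ) := by
        simpa using ((hasDerivAt_id ((y : ℂ))).mul_const I).const_add ((a : ℂ))
      exact h1.inv (ne_zero_aux ha y)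
    exact hbase.comp_ofReal
  have hv : ∀ y : ℝ, HasDerivAt (fun y : ℝ => -I * Complex.exp ((y : ℂ) * I))
      (Complex.exp ((y : ℂ) * I)) y := by
    intro y
    have hbase : HasDerivAt (fun z : ℂ => -I * Complex.exp (z * I))
        (Complex.exp ((y : ℂ) * I)) (y : ℂ) := by
      have h1 : HasDerivAt (fun z : ℂ => z * I) I (y : ℂ) := by
        simpa using (hasDerivAt_id ((y : ℂ))).mul_const I
      have h2 := (Complex.hasDerivAt_exp ((y : ℂ) * I)).comp (y : ℂ) h1
      have := h2.const_mul (-I)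
      refine this.congr_deriv ?_
      rw [show (-I) * (Complex.exp ((y : ℂ) * I) * I)
          = -(Complex.exp ((y : ℂ) * I) * (I * I)) from by ring, Complex.I_mul_I]
      ring
    exact hbase.comp_ofReal
  have hint1 : IntervalIntegrable (fun y : ℝ => -I / ((a : ℂ) + (y : ℂ) * I) ^ 2)
      MeasureTheory.volume (-M) M := by
    apply Continuous.intervalIntegrable
    exact Continuous.div (by fun_prop) (by fun_prop)
      (fun y => pow_ne_zero 2 (ne_zero_aux ha y))
  have hint2 : IntervalIntegrable (fun y : ℝ => Complex.exp ((y : ℂ) * I))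
      MeasureTheory.volume (-M) M := by
    apply Continuous.intervalIntegrable
    fun_prop
  have := intervalIntegral.integral_mul_deriv_eq_deriv_mul
    (u := fun y : ℝ => ((a : ℂ) + (y : ℂ) * I)⁻¹)
    (u' := fun y : ℝ => -I / ((a : ℂ) + (y : ℂ) * I) ^ 2)
    (v := fun y : ℝ => -I * Complex.exp ((y : ℂ) * I))
    (v' := fun y : ℝ => Complex.exp ((y : ℂ) * I))
    (fun y _ => hu y) (fun y _ => hv y) hint1 hint2
  rw [this, sub_eq_add_neg, ← intervalIntegral.integral_neg]
  congr 1
  refine intervalIntegral.integral_congr (fun y _ => ?_)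
  show -(-I / ((a : ℂ) + (y : ℂ) * I) ^ 2 * (-I * Complex.exp ((y : ℂ) * I)))
      = Complex.exp ((y : ℂ) * I) / ((a : ℂ) + (y : ℂ) * I) ^ 2
  have hii : (-I) * (-I) = (-1 : ℂ) := by simp [Complex.I_mul_I]
  calc -(-I / ((a : ℂ) + (y : ℂ) * I) ^ 2 * (-I * Complex.exp ((y : ℂ) * I)))
      = -(((-I) * (-I)) * Complex.exp ((y : ℂ) * I) / ((a : ℂ) + (y : ℂ) * I) ^ 2) := by
        ring
    _ = Complex.exp ((y : ℂ) * I) / ((a : ℂ) + (y : ℂ) * I) ^ 2 := by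
        rw [hii]; ring

lemma boundary_tendsto {a : ℝ} (ha : 1 ≤ a) :
    Tendsto (fun M : ℝ =>
      ((a : ℂ) + (M : ℂ) * I)⁻¹ * (-I * Complex.exp ((M : ℂ) * I))
        - ((a : ℂ) + ((-M : ℝ) : ℂ) * I)⁻¹ * (-I * Complex.exp (((-M : ℝ) : ℂ) * I)))
      atTop (𝓝 0) := by
  apply squeeze_zero_norm' (a := fun M : ℝ => 2 / M)
  · filter_upwards [eventually_ge_atTop (1:ℝ)] with M hM
    have hM0 : (0:ℝ) < M := lt_of_lt_of_le one_pos hM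
    have key : ∀ t : ℝ, M ≤ |t| →
        ‖((a : ℂ) + (t : ℂ) * I)⁻¹ * (-I * Complex.exp ((t : ℂ) * I))‖ ≤ 1 / M := by
      intro t ht
      have he : ‖-I * Complex.exp ((t : ℂ) * I)‖ = 1 := by
        rw [norm_mul, norm_neg, Complex.norm_I, one_mul,
          Complex.norm_exp]
        simp
      rw [norm_mul, norm_inv, he, mul_one]
      have him : |((a : ℂ) + (t : ℂ) * I).im| = |t| := by simp
      have hle : M ≤ ‖(a : ℂ) + (t : ℂ) * I‖ := by
        refine le_trans ht ?_
        rw [← him]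
        exact Complex.abs_im_le_norm _
      rw [one_div]
      exact inv_anti₀ hM0 hle
    refine (norm_sub_le _ _).trans ?_
    have h1 := key M (by rw [abs_of_pos hM0])
    have h2 := key (-M) (by rw [abs_neg, abs_of_pos hM0])
    calc ‖((a : ℂ) + (M : ℂ) * I)⁻¹ * (-I * Complex.exp ((M : ℂ) * I))‖
          + ‖((a : ℂ) + ((-M : ℝ) : ℂ) * I)⁻¹ * (-I * Complex.exp (((-M : ℝ) : ℂ) * I))‖
        ≤ 1 / M + 1 / M := add_le_add h1 h2
      _ = 2 / M := by ring
  · simpa using tendsto_const_nhds.div_atTop (tendsto_id (α := ℝ))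

lemma tendsto_P {a : ℝ} (ha : 1 ≤ a) :
    Tendsto (fun M : ℝ =>
        ∫ y in (-M)..M, ((a : ℂ) + (y : ℂ) * I)⁻¹ * Complex.exp ((y : ℂ) * I))
      atTop (𝓝 (2 * (π : ℂ) * Complex.exp (-(a : ℂ)))) := by
  have h1 : Tendsto (fun M : ℝ =>
      ∫ y in (-M)..M, Complex.exp ((y : ℂ) * I) / ((a : ℂ) + (y : ℂ) * I) ^ 2)
      atTop (𝓝 (∫ y : ℝ, Complex.exp ((y : ℂ) * I) / ((a : ℂ) + (y : ℂ) * I) ^ 2)) :=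
    intervalIntegral_tendsto_integral (integrable_K ha) tendsto_neg_atTop_atBot tendsto_id
  rw [key_integral ha] at h1
  have h3 := (boundary_tendsto ha).add h1
  rw [zero_add] at h3
  exact h3.congr (fun M => (ibp ha M).symm)

end Stmt17

open Stmt17 in
/-- For every real `c ≥ 0`,
`lim_{M→∞} (1/(2π)) ∫_{−M}^{M} e^{1+iy}/((1+c)+iy) dy = e^{−c}`. -/
theorem stmt_17 (c : ℝ) (hc : 0 ≤ c) :
    Tendsto
      (fun M : ℝ =>
        ((1 / (2 * Real.pi) : ℝ) : ℂ) *
          ∫ y : ℝ in (-M)..M,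
            Complex.exp (1 + Complex.I * (y : ℂ)) / ((1 + (c : ℂ)) + Complex.I * (y : ℂ)))
      atTop (𝓝 ((Real.exp (-c) : ℝ) : ℂ)) := by
  have ha : (1:ℝ) ≤ 1 + c := by linarith
  have h := tendsto_P ha
  have hconst := h.const_mul (((1 / (2 * Real.pi) : ℝ) : ℂ) * Complex.exp 1)
  have heq : ∀ M : ℝ,
      ((1 / (2 * Real.pi) : ℝ) : ℂ) *
          ∫ y : ℝ in (-M)..M,
            Complex.exp (1 + Complex.I * (y : ℂ)) / ((1 + (c : ℂ)) + Complex.I * (y : ℂ))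
        = (((1 / (2 * Real.pi) : ℝ) : ℂ) * Complex.exp 1) *
            ∫ y in (-M)..M, (((1 + c : ℝ) : ℂ) + (y : ℂ) * I)⁻¹ * Complex.exp ((y : ℂ) * I) := by
    intro M
    calc ((1 / (2 * Real.pi) : ℝ) : ℂ) *
          ∫ y : ℝ in (-M)..M,
            Complex.exp (1 + Complex.I * (y : ℂ)) / ((1 + (c : ℂ)) + Complex.I * (y : ℂ))
        = ((1 / (2 * Real.pi) : ℝ) : ℂ) * ∫ y in (-M)..M,
            Complex.exp 1 * ((((1 + c : ℝ) : ℂ) + (y : ℂ) * I)⁻¹ * Complex.exp ((y : ℂ) * I)) := by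
          congr 1
          refine intervalIntegral.integral_congr (fun y _ => ?_)
          rw [Complex.exp_add, mul_comm Complex.I ((y : ℂ)), div_eq_mul_inv]
          push_cast
          ring
      _ = _ := by rw [intervalIntegral.integral_const_mul, ← mul_assoc]
  have hval : (((1 / (2 * Real.pi) : ℝ) : ℂ) * Complex.exp 1)
        * (2 * (π : ℂ) * Complex.exp (-((1 + c : ℝ) : ℂ)))
      = ((Real.exp (-c) : ℝ) : ℂ) := by
    rw [Complex.ofReal_exp]
    have hexp : Complex.exp 1 * Complex.exp (-((1 + c : ℝ) : ℂ))
        = Complex.exp ((-c : ℝ) : ℂ) := by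
      rw [← Complex.exp_add]
      congr 1
      push_cast
      ring
    have hπ : ((1 / (2 * Real.pi) : ℝ) : ℂ) * (2 * (π : ℂ)) = 1 := by
      push_cast
      field_simp
    calc (((1 / (2 * Real.pi) : ℝ) : ℂ) * Complex.exp 1)
          * (2 * (π : ℂ) * Complex.exp (-((1 + c : ℝ) : ℂ)))
        = (((1 / (2 * Real.pi) : ℝ) : ℂ) * (2 * (π : ℂ)))
            * (Complex.exp 1 * Complex.exp (-((1 + c : ℝ) : ℂ))) := by ring
      _ = Complex.exp ((-c : ℝ) : ℂ) := by rw [hπ, hexp, one_mul]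
  rw [hval] at hconst
  exact hconst.congr (fun M => (heq M).symm)
end
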